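/- Let n ≥ 2, Ω ⊂ ℝⁿ a bounded one-sided CAD, and p ∈ [1,∞). Then the set L^∞_c(Ω) of bounded measurable functions on Ω with compact support contained in Ω is dense in the tent space T̃₁^p(Ω) := { u ∈ L²_loc(Ω) : ‖C̃₁(u)‖_{L^p(∂Ω,σ)} < ∞ } with respect to the norm ‖u‖_{T̃₁^p(Ω)} := ‖C̃₁(u)‖_{L^p(∂Ω,σ)}. -/

import Mathlib

open MeasureTheory Metric Set ENNReal
open scoped RealInnerProductSpace NNReal MeasureTheory

noncomputable section

/-- `ℝⁿ` with the Euclidean norm. -/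
abbrev Eucl (n : ℕ) := EuclideanSpace ℝ (Fin n)

namespace RobinBVP

variable {n : ℕ}

/-- The surface measure `σ := H^{n−1}|_{∂Ω}` on the boundary of `Ω`. -/
def sm (n : ℕ) (Ω : Set (Eucl n)) : Measure (Eucl n) :=
  (μH[(n : ℝ) - 1]).restrict (frontier Ω)

/-- `δ(x) := dist(x, ∂Ω)`. -/
def bdist (Ω : Set (Eucl n)) (x : Eucl n) : ℝ := Metric.infDist x (frontier Ω)

/-- The nontangential cone `γ(x) := {z ∈ Ω : |z − x| < 2 δ(z)}` with vertex `x ∈ ∂Ω`. -/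
def cone (Ω : Set (Eucl n)) (x : Eucl n) : Set (Eucl n) :=
  {z ∈ Ω | dist z x < 2 * bdist Ω z}

/-- `(⨍_{B(y, δ(y)/4)} |u(z)|² dz)^{1/2}`, as an extended nonnegative real. -/
def avg2 {F : Type*} [NormedAddCommGroup F] (Ω : Set (Eucl n)) (u : Eucl n → F)
    (y : Eucl n) : ℝ≥0∞ :=
  (⨍⁻ z in ball y (bdist Ω y / 4), (‖u z‖₊ : ℝ≥0∞) ^ 2 ∂volume) ^ (1/2 : ℝ)

/-- The modified nontangential maximal function `Ñ(u)`. -/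
def ntMax {F : Type*} [NormedAddCommGroup F] (Ω : Set (Eucl n)) (u : Eucl n → F)
    (x : Eucl n) : ℝ≥0∞ :=
  ⨆ y ∈ cone Ω x, avg2 Ω u y

/-- The averaged Carleson functional `C̃₁(u)`. -/
def carleson {F : Type*} [NormedAddCommGroup F] (Ω : Set (Eucl n)) (u : Eucl n → F)
    (x : Eucl n) : ℝ≥0∞ :=
  ⨆ r ∈ Ioo (0 : ℝ) (Metric.diam (frontier Ω)),
    (sm n Ω (ball x r))⁻¹ *
      ∫⁻ y in ball x r ∩ Ω, avg2 Ω u y / ENNReal.ofReal (bdist Ω y) ∂volume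

/-- The `L^p(μ)` norm of an `ℝ≥0∞`-valued function. -/
def lpnorm (g : Eucl n → ℝ≥0∞) (p : ℝ) (μ : Measure (Eucl n)) : ℝ≥0∞ :=
  (∫⁻ x, g x ^ p ∂μ) ^ (1/p)

/-- Bounded measurable functions with compact support contained in `Ω`. -/
def MemLinfc {F : Type*} [NormedAddCommGroup F] [MeasurableSpace F]
    (Ω : Set (Eucl n)) (f : Eucl n → F) : Prop :=
  Measurable f ∧ (∃ C, ∀ x, ‖f x‖ ≤ C) ∧
    ∃ K, IsCompact K ∧ K ⊆ Ω ∧ ∀ x ∉ K, f x = 0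

/-- Membership in `W^{1,2}(s)`, formalized via the (classical) gradient. -/
def MemW12 (s : Set (Eucl n)) (u : Eucl n → ℝ) : Prop :=
  MemLp u 2 (volume.restrict s) ∧ MemLp (fun x => gradient u x) 2 (volume.restrict s)

/-- Locally square-integrable functions on `Ω`. -/
def MemL2loc {F : Type*} [NormedAddCommGroup F] (Ω : Set (Eucl n)) (u : Eucl n → F) : Prop :=
  ∀ K, IsCompact K → K ⊆ Ω → (∫⁻ x in K, (‖u x‖₊ : ℝ≥0∞) ^ 2 ∂volume) < ∞

/-- Uniform ellipticity of the coefficient matrix `A` with ellipticity constant `μ₀`,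
with real, bounded, measurable entries. -/
def UniformlyEllipticWith (Ω : Set (Eucl n)) (A : Eucl n → Eucl n →L[ℝ] Eucl n)
    (μ₀ : ℝ) : Prop :=
  μ₀ ∈ Ioc (0:ℝ) 1 ∧ (∀ ξ : Eucl n, Measurable fun x => A x ξ) ∧
    (∃ Λ : ℝ, ∀ x ∈ Ω, ‖A x‖ ≤ Λ) ∧
    ∀ x ∈ Ω, ∀ ξ : Eucl n, μ₀ * ‖ξ‖ ^ 2 ≤ ⟪A x ξ, ξ⟫ ∧ ⟪A x ξ, ξ⟫ ≤ μ₀⁻¹ * ‖ξ‖ ^ 2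

/-- `L := −div(A∇·)` is uniformly elliptic. -/
def UniformlyElliptic (Ω : Set (Eucl n)) (A : Eucl n → Eucl n →L[ℝ] Eucl n) : Prop :=
  ∃ μ₀, UniformlyEllipticWith Ω A μ₀

/-- The transposed coefficients `Aᵀ`, defining the adjoint operator `L^* = −div(Aᵀ∇·)`. -/
def At (A : Eucl n → Eucl n →L[ℝ] Eucl n) : Eucl n → Eucl n →L[ℝ] Eucl n :=
  fun x => ContinuousLinearMap.adjoint (A x)

/-- The identity coefficients corresponding to the Laplace operator `L = −Δ`. -/
def idA (n : ℕ) : Eucl n → Eucl n →L[ℝ] Eucl n :=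
  fun _ => ContinuousLinearMap.id ℝ (Eucl n)

/-- The standing assumptions on the Robin coefficient `α`:
`0 ≤ α ∈ L^{n−1+ε₀}(∂Ω,σ)` and `α ≥ c₀ > 0` on a set of positive surface measure. -/
def AlphaCond (Ω : Set (Eucl n)) (α : Eucl n → ℝ) : Prop :=
  Measurable α ∧ (∀ x ∈ frontier Ω, 0 ≤ α x) ∧
  (∃ ε₀ > (0:ℝ), MemLp α (ENNReal.ofReal ((n : ℝ) - 1 + ε₀)) (sm n Ω)) ∧
  (∃ c₀ > (0:ℝ), ∃ E₀ ⊆ frontier Ω, MeasurableSet E₀ ∧ 0 < sm n Ω E₀ ∧ ∀ x ∈ E₀, c₀ ≤ α x)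

/-- The additional assumption `α ∈ L^p(∂Ω,σ)` with
`‖α‖_{L^p(B(x,r)∩∂Ω,σ)} ≤ C₀ r^{(n−1)/p}` for all boundary balls. -/
def AlphaLpBound (Ω : Set (Eucl n)) (α : Eucl n → ℝ) (p : ℝ) (C₀ : ℝ) : Prop :=
  MemLp α (ENNReal.ofReal p) (sm n Ω) ∧
  ∀ x ∈ frontier Ω, ∀ r ∈ Ioo (0:ℝ) (Metric.diam Ω),
    (∫⁻ y in ball x r, (‖α y‖₊ : ℝ≥0∞) ^ p ∂(sm n Ω)) ^ (1/p)
      ≤ ENNReal.ofReal (C₀ * r ^ (((n:ℝ) - 1) / p))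

/-- `u` is a weak solution of `Lu = h − div F` in `Ω` with Robin boundary
condition `∂u/∂ν + αu = f + F·ν` on `∂Ω`. -/
def IsWeakSolution (Ω : Set (Eucl n)) (A : Eucl n → Eucl n →L[ℝ] Eucl n)
    (α : Eucl n → ℝ) (h : Eucl n → ℝ) (Fv : Eucl n → Eucl n) (f : Eucl n → ℝ)
    (u : Eucl n → ℝ) : Prop :=
  MemW12 Ω u ∧
  ∀ φ : Eucl n → ℝ, ContDiff ℝ (⊤ : ℕ∞) φ → HasCompactSupport φ →
    ((∫ x in Ω, ⟪A x (gradient u x), gradient φ x⟫ ∂volume)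
        + ∫ x in frontier Ω, α x * u x * φ x ∂(sm n Ω))
      = (∫ x in frontier Ω, f x * φ x ∂(sm n Ω))
        + ∫ x in Ω, (h x * φ x + ⟪Fv x, gradient φ x⟫) ∂volume

/-- `u` is a local weak solution of `Lu = −div F` in `B(x₀,R) ∩ Ω` with Robin
condition `∂u/∂ν + αu = F·ν` on `B(x₀,R) ∩ ∂Ω`. -/
def IsLocalWeakSolution (Ω : Set (Eucl n)) (A : Eucl n → Eucl n →L[ℝ] Eucl n)
    (α : Eucl n → ℝ) (Fv : Eucl n → Eucl n) (x₀ : Eucl n) (R : ℝ)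
    (u : Eucl n → ℝ) : Prop :=
  MemW12 (ball x₀ R ∩ Ω) u ∧
  ∀ φ : Eucl n → ℝ, ContDiff ℝ (⊤ : ℕ∞) φ → HasCompactSupport φ → tsupport φ ⊆ ball x₀ R →
    ((∫ x in ball x₀ R ∩ Ω, ⟪A x (gradient u x), gradient φ x⟫ ∂volume)
        + ∫ x in ball x₀ R ∩ frontier Ω, α x * u x * φ x ∂(sm n Ω))
      = ∫ x in ball x₀ R ∩ Ω, ⟪Fv x, gradient φ x⟫ ∂volume

/-- `u` is a weak solution of `Lu = −div F` in the ball `B(x₀,R)`. -/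
def IsInteriorWeakSolution (A : Eucl n → Eucl n →L[ℝ] Eucl n)
    (Fv : Eucl n → Eucl n) (x₀ : Eucl n) (R : ℝ) (u : Eucl n → ℝ) : Prop :=
  MemW12 (ball x₀ R) u ∧
  ∀ φ : Eucl n → ℝ, ContDiff ℝ (⊤ : ℕ∞) φ → HasCompactSupport φ → tsupport φ ⊆ ball x₀ R →
    (∫ x in ball x₀ R, ⟪A x (gradient u x), gradient φ x⟫ ∂volume)
      = ∫ x in ball x₀ R, ⟪Fv x, gradient φ x⟫ ∂volume

/-- The corkscrew condition. -/
def CorkscrewCond (Ω : Set (Eucl n)) : Prop :=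
  ∃ c ∈ Ioo (0:ℝ) 1, ∀ x ∈ frontier Ω, ∀ r ∈ Ioo (0:ℝ) (Metric.diam Ω),
    ∃ y, ball y (c * r) ⊆ ball x r ∩ Ω

/-- The Harnack chain condition. -/
def HarnackChainCond (Ω : Set (Eucl n)) : Prop :=
  ∃ M ≥ (1:ℝ), ∃ Nf : ℝ → ℕ, ∀ x ∈ Ω, ∀ y ∈ Ω,
    ∃ N : ℕ, 0 < N ∧ N ≤ Nf (dist x y / min (bdist Ω x) (bdist Ω y)) ∧
      ∃ c : ℕ → Eucl n, ∃ ρ : ℕ → ℝ,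
        x ∈ ball (c 0) (ρ 0) ∧ y ∈ ball (c (N - 1)) (ρ (N - 1)) ∧
        (∀ k < N, 0 < ρ k ∧ ball (c k) (ρ k) ⊆ Ω ∧
          M⁻¹ * (2 * ρ k) ≤ Metric.infDist (c k) (frontier Ω) - ρ k ∧
          Metric.infDist (c k) (frontier Ω) - ρ k ≤ M * (2 * ρ k)) ∧
        ∀ k, k + 1 < N → (ball (c k) (ρ k) ∩ ball (c (k+1)) (ρ (k+1))).Nonempty

/-- `∂Ω` is `(n−1)`-Ahlfors regular. -/
def AhlforsRegularBoundary (n : ℕ) (Ω : Set (Eucl n)) : Prop :=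
  ∃ C > (0:ℝ), ∀ x ∈ frontier Ω, ∀ r ∈ Ioo (0:ℝ) (Metric.diam (frontier Ω)),
    ENNReal.ofReal (C⁻¹ * r ^ ((n:ℝ) - 1)) ≤ sm n Ω (ball x r) ∧
      sm n Ω (ball x r) ≤ ENNReal.ofReal (C * r ^ ((n:ℝ) - 1))

/-- Bounded one-sided chord arc domain. -/
def BoundedOneSidedCAD (n : ℕ) (Ω : Set (Eucl n)) : Prop :=
  IsOpen Ω ∧ IsConnected Ω ∧ Bornology.IsBounded Ω ∧
    CorkscrewCond Ω ∧ HarnackChainCond Ω ∧ AhlforsRegularBoundary n Ω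

/-- A bounded Lipschitz domain whose boundary is locally the graph of a Lipschitz
function with Lipschitz constant `Llip`, with `Ω` locally the region above the graph. -/
def IsBoundedLipschitzDomain (n : ℕ) (Ω : Set (Eucl n)) (Llip : ℝ) : Prop :=
  IsOpen Ω ∧ IsConnected Ω ∧ Bornology.IsBounded Ω ∧ 0 ≤ Llip ∧
  ∀ x ∈ frontier Ω, ∃ r > (0:ℝ), ∃ v : Eucl n, ‖v‖ = 1 ∧ ∃ g : Eucl n → ℝ,
    LipschitzWith (Real.toNNReal Llip) g ∧
    ∀ y ∈ ball x r, (y ∈ Ω ↔ g (y - ⟪y, v⟫ • v) < ⟪y, v⟫)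

/-- A bounded `C¹` domain. -/
def IsBoundedC1Domain (n : ℕ) (Ω : Set (Eucl n)) : Prop :=
  IsOpen Ω ∧ IsConnected Ω ∧ Bornology.IsBounded Ω ∧
  ∀ x ∈ frontier Ω, ∃ r > (0:ℝ), ∃ v : Eucl n, ‖v‖ = 1 ∧ ∃ g : Eucl n → ℝ,
    ContDiff ℝ 1 g ∧
    ∀ y ∈ ball x r, (y ∈ Ω ↔ g (y - ⟪y, v⟫ • v) < ⟪y, v⟫)

/-- Solvability of the `L^p` Robin problem `(R_p)_L`. -/
def RobinSolvable (Ω : Set (Eucl n)) (A : Eucl n → Eucl n →L[ℝ] Eucl n)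
    (α : Eucl n → ℝ) (p : ℝ) : Prop :=
  ∃ C > (0:ℝ), ∀ f : Eucl n → ℝ, Continuous f →
    ∀ u, IsWeakSolution Ω A α 0 0 f u →
      lpnorm (ntMax Ω fun x => gradient u x) p (sm n Ω)
        ≤ ENNReal.ofReal C * eLpNorm f (ENNReal.ofReal p) (sm n Ω)

/-- Solvability of the strengthened `L^p` Robin problem `(R̃_p)_L`. -/
def RobinTildeSolvable (Ω : Set (Eucl n)) (A : Eucl n → Eucl n →L[ℝ] Eucl n)
    (α : Eucl n → ℝ) (p : ℝ) : Prop :=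
  ∃ C > (0:ℝ), ∀ f : Eucl n → ℝ, Continuous f →
    ∀ u, IsWeakSolution Ω A α 0 0 f u →
      lpnorm (ntMax Ω fun x => gradient u x) p (sm n Ω)
          + lpnorm (ntMax Ω u) p (sm n Ω)
        ≤ ENNReal.ofReal C * eLpNorm f (ENNReal.ofReal p) (sm n Ω)

/-- `u` solves the Dirichlet problem `Lu = 0` in `Ω`, `u = f` on `∂Ω`. -/
def IsDirichletSolution (Ω : Set (Eucl n)) (A : Eucl n → Eucl n →L[ℝ] Eucl n)
    (f : Eucl n → ℝ) (u : Eucl n → ℝ) : Prop :=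
  MemW12 Ω u ∧ (∀ x ∈ frontier Ω, u x = f x) ∧
  ∀ φ : Eucl n → ℝ, ContDiff ℝ (⊤ : ℕ∞) φ → HasCompactSupport φ → tsupport φ ⊆ Ω →
    (∫ x in Ω, ⟪A x (gradient u x), gradient φ x⟫ ∂volume) = 0

/-- Solvability of the `L^p` Dirichlet problem `(D_p)_L`. -/
def DirichletSolvable (Ω : Set (Eucl n)) (A : Eucl n → Eucl n →L[ℝ] Eucl n)
    (p : ℝ) : Prop :=
  ∃ C > (0:ℝ), ∀ f : Eucl n → ℝ, Continuous f →
    ∀ u, IsDirichletSolution Ω A f u →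
      lpnorm (ntMax Ω u) p (sm n Ω)
        ≤ ENNReal.ofReal C * eLpNorm f (ENNReal.ofReal p) (sm n Ω)

/-- Solvability of the `L^p` Poisson–Robin problem `(PR_p)_L`. -/
def PRSolvable (Ω : Set (Eucl n)) (A : Eucl n → Eucl n →L[ℝ] Eucl n)
    (α : Eucl n → ℝ) (p : ℝ) : Prop :=
  ∃ C > (0:ℝ), ∀ Fv : Eucl n → Eucl n, MemLinfc Ω Fv →
    ∀ u, IsWeakSolution Ω A α 0 Fv 0 u →
      lpnorm (ntMax Ω u) p (sm n Ω)
        ≤ ENNReal.ofReal C *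
            lpnorm (carleson Ω fun x => bdist Ω x • Fv x) p (sm n Ω)

/-- Solvability of the weak `L^p` Poisson–Robin problem `(wPR_p)_L`. -/
def wPRSolvable (Ω : Set (Eucl n)) (A : Eucl n → Eucl n →L[ℝ] Eucl n)
    (α : Eucl n → ℝ) (p : ℝ) : Prop :=
  ∃ C > (0:ℝ), ∀ Fv : Eucl n → Eucl n, MemLinfc Ω Fv →
    ∀ u, IsWeakSolution Ω A α 0 Fv 0 u →
      lpnorm (ntMax Ω fun x => bdist Ω x • gradient u x) p (sm n Ω)
        ≤ ENNReal.ofReal C *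
            lpnorm (carleson Ω fun x => bdist Ω x • Fv x) p (sm n Ω)

/-- Solvability of the `L^p` Poisson–Robin-regularity problem `(PRR_p)_L`. -/
def PRRSolvable (Ω : Set (Eucl n)) (A : Eucl n → Eucl n →L[ℝ] Eucl n)
    (α : Eucl n → ℝ) (p : ℝ) : Prop :=
  ∃ C > (0:ℝ), ∀ h : Eucl n → ℝ, MemLinfc Ω h → ∀ Fv : Eucl n → Eucl n, MemLinfc Ω Fv →
    ∀ u, IsWeakSolution Ω A α h Fv 0 u →
      lpnorm (ntMax Ω fun x => gradient u x) p (sm n Ω)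
        ≤ ENNReal.ofReal C *
            lpnorm (carleson Ω fun x => bdist Ω x * |h x| + ‖Fv x‖) p (sm n Ω)

/-- Solvability of the weak `L^p` Poisson–Robin-regularity problem `(wPRR_p)_L`. -/
def wPRRSolvable (Ω : Set (Eucl n)) (A : Eucl n → Eucl n →L[ℝ] Eucl n)
    (α : Eucl n → ℝ) (p : ℝ) : Prop :=
  ∃ C > (0:ℝ), ∀ Fv : Eucl n → Eucl n, MemLinfc Ω Fv →
    ∀ u, IsWeakSolution Ω A α 0 Fv 0 u →
      lpnorm (ntMax Ω fun x => gradient u x) p (sm n Ω)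
        ≤ ENNReal.ofReal C * lpnorm (carleson Ω Fv) p (sm n Ω)

/-- The local property `(LocR_p)_L`. -/
def LocR (Ω : Set (Eucl n)) (A : Eucl n → Eucl n →L[ℝ] Eucl n)
    (α : Eucl n → ℝ) (p : ℝ) : Prop :=
  ∃ C > (0:ℝ), ∀ x₀ ∈ frontier Ω, ∀ r ∈ Ioo (0:ℝ) (Metric.diam Ω),
    ∀ u, IsLocalWeakSolution Ω A α 0 x₀ (2 * r) u →
      lpnorm (ntMax Ω ((ball x₀ r).indicator fun x => gradient u x)) p (sm n Ω)
        ≤ ENNReal.ofReal (C * r ^ (((n:ℝ) - 1) / p) *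
            ((⨍ x in ball x₀ (2*r) ∩ Ω, ‖gradient u x‖)
              + ⨍ x in ball x₀ (2*r) ∩ Ω, |u x|))



section AuxMeasure
variable {α : Type*} [MeasurableSpace α] {μ : Measure α}

lemma lintegral_innernull_zero {Z : Set α}
    (hZ : ∀ S : Set α, MeasurableSet S → S ⊆ Z → μ S = 0) {Q : α → ℝ≥0∞}
    (hQ : ∀ z, z ∉ Z → Q z = 0) : ∫⁻ a, Q a ∂μ = 0 := by
  rw [← iSup_lintegral_measurable_le_eq_lintegral]
  refine le_antisymm ?_ (zero_le)
  refine iSup_le fun g => iSup_le fun hg => iSup_le fun hle => ?_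
  have hsub : {a | g a ≠ 0} ⊆ Z := by
    intro a ha
    by_contra h
    exact ha (le_antisymm (hQ a h ▸ hle a) (zero_le))
  have hmeas : MeasurableSet {a | g a ≠ 0} := (hg (measurableSet_singleton (0:ℝ≥0∞))).compl
  have hnull : μ {a | g a ≠ 0} = 0 := hZ _ hmeas hsub
  have hg0 : g =ᵐ[μ] 0 := by
    rw [Filter.EventuallyEq, ae_iff]
    simpa using hnull
  rw [lintegral_congr_ae hg0]
  simp

lemma exists_core (μ : Measure α) (f : α → ℝ≥0∞)
    (hf : ∫⁻ a, f a ∂μ ≠ ∞) :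
    ∃ m : α → ℝ≥0∞, Measurable m ∧ m ≤ f ∧
      ∀ A : Set α, MeasurableSet A → ∫⁻ a in A, f a ∂μ = ∫⁻ a in A, m a ∂μ := by
  obtain ⟨m, hm, hle, heq⟩ := exists_measurable_le_lintegral_eq μ f
  refine ⟨m, hm, hle, fun A hA => ?_⟩
  have h1 : ∫⁻ a in A, m a ∂μ ≤ ∫⁻ a in A, f a ∂μ := lintegral_mono hle
  have h2 : ∫⁻ a in Aᶜ, m a ∂μ ≤ ∫⁻ a in Aᶜ, f a ∂μ := lintegral_mono hle
  have hfs : ∫⁻ a in A, f a ∂μ + ∫⁻ a in Aᶜ, f a ∂μ = ∫⁻ a, f a ∂μ := by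
    rw [← lintegral_add_measure, Measure.restrict_add_restrict_compl hA]
  have hms : ∫⁻ a in A, m a ∂μ + ∫⁻ a in Aᶜ, m a ∂μ = ∫⁻ a, m a ∂μ := by
    rw [← lintegral_add_measure, Measure.restrict_add_restrict_compl hA]
  have hAcf : ∫⁻ a in Aᶜ, f a ∂μ ≠ ∞ := by
    refine ne_top_of_le_ne_top hf ?_
    rw [← hfs]; exact le_add_self
  have htot : ∫⁻ a in A, f a ∂μ + ∫⁻ a in Aᶜ, f a ∂μ
      = ∫⁻ a in A, m a ∂μ + ∫⁻ a in Aᶜ, m a ∂μ := by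
    rw [hfs, hms, heq]
  have key : ∫⁻ a in A, f a ∂μ ≤ ∫⁻ a in A, m a ∂μ := by
    have e1 : ∫⁻ a in A, f a ∂μ
        = (∫⁻ a in A, m a ∂μ + ∫⁻ a in Aᶜ, m a ∂μ) - ∫⁻ a in Aᶜ, f a ∂μ := by
      rw [← htot]
      exact (ENNReal.add_sub_cancel_right hAcf).symm
    rw [e1]
    calc (∫⁻ a in A, m a ∂μ + ∫⁻ a in Aᶜ, m a ∂μ) - ∫⁻ a in Aᶜ, f a ∂μ
        ≤ (∫⁻ a in A, m a ∂μ + ∫⁻ a in Aᶜ, f a ∂μ) - ∫⁻ a in Aᶜ, f a ∂μ :=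
          tsub_le_tsub_right (add_le_add_right h2 _) _
      _ = ∫⁻ a in A, m a ∂μ := ENNReal.add_sub_cancel_right hAcf
  exact le_antisymm key h1

lemma setLIntegral_mono_on' {s : Set α} (hs : MeasurableSet s) {f g : α → ℝ≥0∞}
    (h : ∀ y ∈ s, f y ≤ g y) : ∫⁻ a in s, f a ∂μ ≤ ∫⁻ a in s, g a ∂μ := by
  rw [← lintegral_indicator hs f, ← lintegral_indicator hs g]
  refine lintegral_mono fun y => ?_
  by_cases hy : y ∈ s
  · simpa [Set.indicator_of_mem hy] using h y hy
  · simp [Set.indicator_of_notMem hy]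

lemma nnnorm_sq_eq_ofReal (x : ℝ) : (‖x‖₊ : ℝ≥0∞)^2 = ENNReal.ofReal (x^2) := by
  rw [show (‖x‖₊ : ℝ≥0∞) = ENNReal.ofReal ‖x‖ from (ofReal_norm x).symm, ← ENNReal.ofReal_pow (norm_nonneg x)]
  congr 1
  rw [Real.norm_eq_abs, sq_abs]

lemma nnnorm_sub_sq_le (a b c : ℝ) :
    (‖a - c‖₊ : ℝ≥0∞) ^ 2
      ≤ 2 * (‖a - b‖₊ : ℝ≥0∞) ^ 2 + 2 * (‖b - c‖₊ : ℝ≥0∞) ^ 2 := by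
  rw [nnnorm_sq_eq_ofReal, nnnorm_sq_eq_ofReal, nnnorm_sq_eq_ofReal]
  have h1 : (a-c)^2 ≤ 2*(a-b)^2 + 2*(b-c)^2 := by nlinarith [sq_nonneg (a-2*b+c)]
  calc ENNReal.ofReal ((a-c)^2) ≤ ENNReal.ofReal (2*(a-b)^2 + 2*(b-c)^2) :=
        ENNReal.ofReal_le_ofReal h1
    _ = ENNReal.ofReal (2*(a-b)^2) + ENNReal.ofReal (2*(b-c)^2) := by
        rw [ENNReal.ofReal_add] <;> positivity
    _ = 2 * ENNReal.ofReal ((a-b)^2) + 2 * ENNReal.ofReal ((b-c)^2) := by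
        rw [ENNReal.ofReal_mul (by norm_num : (0:ℝ) ≤ 2),
            ENNReal.ofReal_mul (by norm_num : (0:ℝ) ≤ 2)]
        norm_num

end AuxMeasure

section Geometry
variable {n : ℕ}

/-- Hitting the frontier along a segment. -/
lemma exists_frontier_seg {Ω : Set (Eucl n)} (hΩo : IsOpen Ω) {y z : Eucl n}
    (hy : y ∈ Ω) (hz : z ∉ Ω) :
    ∃ t : ℝ, t ∈ Set.Ioc (0:ℝ) 1 ∧ y + t • (z - y) ∈ frontier Ω := by
  set f : ℝ → Eucl n := fun t => y + t • (z - y) with hf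
  have hfc : Continuous f := by
    apply Continuous.add continuous_const
    exact Continuous.smul continuous_id continuous_const
  set S : Set ℝ := {t ∈ Set.Icc (0:ℝ) 1 | f t ∉ Ω} with hS
  have hS1 : (1:ℝ) ∈ S := by
    constructor
    · exact ⟨zero_le_one, le_refl 1⟩
    · simpa [hf] using hz
  have hSne : S.Nonempty := ⟨1, hS1⟩
  have hSbdd : BddBelow S := ⟨0, fun t ht => ht.1.1⟩
  have hSclosed : IsClosed S := by
    have : S = Set.Icc (0:ℝ) 1 ∩ f ⁻¹' Ωᶜ := rfl
    rw [this]
    exact isClosed_Icc.inter (hΩo.isClosed_compl.preimage hfc)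
  set t₀ := sInf S with ht₀
  have ht₀S : t₀ ∈ S := hSclosed.csInf_mem hSne hSbdd
  have ht₀mem : t₀ ∈ Set.Icc (0:ℝ) 1 := ht₀S.1
  have ht₀notin : f t₀ ∉ Ω := ht₀S.2
  have ht₀pos : 0 < t₀ := by
    rcases lt_or_eq_of_le ht₀mem.1 with h | h
    · exact h
    · exfalso; apply ht₀notin; rw [← h]; simpa [hf] using hy
  refine ⟨t₀, ⟨ht₀pos, ht₀mem.2⟩, ?_⟩
  rw [hΩo.frontier_eq]
  refine ⟨?_, ht₀notin⟩
  -- f t₀ ∈ closure Ω : approach from the left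
  have hsub : Set.Ico (0:ℝ) t₀ ⊆ f ⁻¹' Ω := by
    intro t ht
    by_contra hmem
    have : t ∈ S := ⟨⟨ht.1, le_trans ht.2.le ht₀mem.2⟩, hmem⟩
    exact absurd (csInf_le hSbdd this) (not_le.mpr ht.2)
  have hmemcl : t₀ ∈ closure (Set.Ico (0:ℝ) t₀) := by
    rw [closure_Ico (ne_of_lt ht₀pos)]
    exact ⟨le_of_lt ht₀pos, le_refl _⟩
  have := (hfc.continuousWithinAt (s := Set.Ico (0:ℝ) t₀) (x := t₀)).mem_closure_image hmemcl
  refine closure_mono ?_ this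
  rintro w ⟨t, ht, rfl⟩
  exact hsub ht

lemma ball_bdist_subset {Ω : Set (Eucl n)} (hΩo : IsOpen Ω) {y : Eucl n}
    (hy : y ∈ Ω) : ball y (Metric.infDist y (frontier Ω)) ⊆ Ω := by
  intro z hz
  by_contra hzo
  obtain ⟨t, ht, hfr⟩ := exists_frontier_seg hΩo hy hzo
  have hd : dist y (y + t • (z - y)) = t * ‖z - y‖ := by
    rw [dist_self_add_right]
    rw [norm_smul, Real.norm_eq_abs, abs_of_pos ht.1]
  have h1 : Metric.infDist y (frontier Ω) ≤ t * ‖z - y‖ := by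
    rw [← hd]; exact Metric.infDist_le_dist_of_mem hfr
  have h2 : t * ‖z - y‖ ≤ ‖z - y‖ := by
    nlinarith [ht.2, norm_nonneg (z - y), ht.1]
  have h3 : ‖z - y‖ < Metric.infDist y (frontier Ω) := by
    rw [← dist_eq_norm_sub]
    exact mem_ball.mp hz
  linarith

lemma mem_omega_dist_lt_diam {Ω : Set (Eucl n)} (hΩo : IsOpen Ω)
    (hb : Bornology.IsBounded Ω) {x₀ : Eucl n} (hx₀ : x₀ ∈ frontier Ω)
    {z : Eucl n} (hz : z ∈ Ω) : dist z x₀ < Metric.diam (frontier Ω) := by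
  have hfrb : Bornology.IsBounded (frontier Ω) := by
    refine (hb.closure).subset ?_
    rw [hΩo.frontier_eq]; exact Set.diff_subset
  have hx₀no : x₀ ∉ Ω := by
    rw [hΩo.frontier_eq] at hx₀; exact hx₀.2
  have hzx : z ≠ x₀ := fun h => hx₀no (h ▸ hz)
  have hnorm : 0 < ‖z - x₀‖ := by
    rw [norm_pos_iff, sub_ne_zero]; exact hzx
  -- pick far point on the ray
  obtain ⟨R, hR⟩ := hb.subset_closedBall 0
  set s : ℝ := (R + ‖z‖ + 1) / ‖z - x₀‖ with hs
  have hR0 : (0:ℝ) ≤ R := by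
    have := hR hz
    rw [mem_closedBall, dist_zero_right] at this
    linarith [norm_nonneg z]
  have hspos : 0 < s := by
    rw [hs]
    apply div_pos (by linarith [norm_nonneg z]) hnorm
  set z' : Eucl n := z + s • (z - x₀) with hz'
  have hz'o : z' ∉ Ω := by
    intro hmem
    have := hR hmem
    rw [mem_closedBall, dist_zero_right] at this
    have h1 : ‖s • (z - x₀)‖ ≤ ‖z'‖ + ‖z‖ := by
      have : s • (z - x₀) = z' - z := by rw [hz']; abel
      rw [this]
      have := norm_sub_le z' z
      linarith [this]
    rw [norm_smul, Real.norm_eq_abs, abs_of_pos hspos] at h1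
    rw [hs, div_mul_cancel₀ _ (ne_of_gt hnorm)] at h1
    linarith
  obtain ⟨t, ht, hfr⟩ := exists_frontier_seg hΩo hz hz'o
  have hw : z + t • (z' - z) = z + (t * s) • (z - x₀) := by
    rw [hz']; rw [show z + s • (z - x₀) - z = s • (z - x₀) by abel, smul_smul]
  have hdist : dist (z + t • (z' - z)) x₀ = (1 + t * s) * ‖z - x₀‖ := by
    rw [hw]
    have : z + (t * s) • (z - x₀) - x₀ = (1 + t * s) • (z - x₀) := by
      rw [add_smul, one_smul]; abel
    rw [dist_eq_norm_sub, this, norm_smul, Real.norm_eq_abs, abs_of_pos]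
    nlinarith [ht.1, hspos]
  have hle : dist (z + t • (z' - z)) x₀ ≤ Metric.diam (frontier Ω) :=
    Metric.dist_le_diam_of_mem hfrb hfr hx₀
  have : dist z x₀ < dist (z + t • (z' - z)) x₀ := by
    rw [hdist, dist_eq_norm_sub]
    nlinarith [ht.1, hspos, hnorm, mul_pos ht.1 hspos]
  linarith

end Geometry

section Approx
variable {α : Type*} [MeasurableSpace α]

lemma lintegral_const_mul_le' {μ : Measure α} (r : ℝ≥0∞) (f : α → ℝ≥0∞) (hr : r ≠ ∞) :
    ∫⁻ a, r * f a ∂μ ≤ r * ∫⁻ a, f a ∂μ := by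
  rcases eq_or_ne r 0 with rfl | hr0
  · simp
  · have h1 : r⁻¹ * ∫⁻ a, r * f a ∂μ ≤ ∫⁻ a, r⁻¹ * (r * f a) ∂μ :=
      lintegral_const_mul_le r⁻¹ _
    have h2 : ∀ a, r⁻¹ * (r * f a) = f a := by
      intro a
      rw [← mul_assoc, ENNReal.inv_mul_cancel hr0 hr, one_mul]
    simp only [h2] at h1
    calc ∫⁻ a, r * f a ∂μ = r * (r⁻¹ * ∫⁻ a, r * f a ∂μ) := by
          rw [← mul_assoc, ENNReal.mul_inv_cancel hr0 hr, one_mul]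
      _ ≤ r * ∫⁻ a, f a ∂μ := mul_le_mul_right h1 r

/-- Bounded measurable approximation of an arbitrary function in the
lower-integral `L²` sense, uniformly over measurable subsets. -/
lemma approx_lemma (μ : Measure α) {K : Set α} (hK : MeasurableSet K) (hKfin : μ K ≠ ∞)
    (u : α → ℝ) (hF : ∫⁻ z in K, (‖u z‖₊ : ℝ≥0∞) ^ 2 ∂μ ≠ ∞)
    {η : ℝ≥0∞} (hη : 0 < η) :
    ∃ g : α → ℝ, Measurable g ∧ (∃ C : ℝ, ∀ x, ‖g x‖ ≤ C) ∧ (∀ x, x ∉ K → g x = 0) ∧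
      ∃ e : α → ℝ≥0∞, Measurable e ∧ (∫⁻ z in K, e z ∂μ) < η ∧
        ∀ A : Set α, MeasurableSet A → A ⊆ K →
          ∫⁻ z in A, (‖u z - g z‖₊ : ℝ≥0∞) ^ 2 ∂μ ≤ ∫⁻ z in A, e z ∂μ := by
  classical
  obtain ⟨η', hη'pos, hη'le, hη'top⟩ : ∃ η', 0 < η' ∧ η' ≤ η ∧ η' ≠ ∞ :=
    ⟨min η 1, lt_min hη one_pos, min_le_left _ _,
      ne_top_of_le_ne_top (by norm_num) (min_le_right η 1)⟩
  set β : ℝ≥0∞ := η' / 2 / 2 with hβ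
  have hβ0 : β ≠ 0 := by
    simp only [hβ]
    intro h
    rcases ENNReal.div_eq_zero_iff.mp h with h | h
    · rcases ENNReal.div_eq_zero_iff.mp h with h | h
      · exact hη'pos.ne' h
      · exact (by norm_num : (2:ℝ≥0∞) ≠ ∞) h
    · exact (by norm_num : (2:ℝ≥0∞) ≠ ∞) h
  have hβtop : β ≠ ∞ := by
    refine ne_top_of_le_ne_top hη'top ?_
    simp only [hβ]
    exact le_trans ENNReal.half_le_self ENNReal.half_le_self
  have hββ : β + β < η := by
    have h1 : β + β = η' / 2 := ENNReal.add_halves _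
    rw [h1]
    exact lt_of_lt_of_le (ENNReal.half_lt_self hη'pos.ne' hη'top) hη'le
  -- choose δ'
  obtain ⟨δ', hδ'pos, hδ'small⟩ :
      ∃ δ' : ℝ, 0 < δ' ∧ 2 * ENNReal.ofReal (δ' ^ 2) * μ K ≤ β := by
    by_cases hK0 : μ K = 0
    · exact ⟨1, one_pos, by simp [hK0]⟩
    · set c := β / (2 * μ K) with hc
      have hc0 : c ≠ 0 := by
        simp only [hc]
        intro h
        rcases ENNReal.div_eq_zero_iff.mp h with h | h
        · exact hβ0 h
        · exact (ENNReal.mul_ne_top (by norm_num) hKfin) h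
      have hmin0 : min c 1 ≠ 0 := by
        intro h
        rcases min_eq_iff.mp h with ⟨h1, -⟩ | ⟨h1, -⟩
        · exact hc0 h1
        · exact one_ne_zero h1
      have hmintop : min c 1 ≠ ∞ :=
        ne_top_of_le_ne_top (by norm_num) (min_le_right c 1)
      set cr := (min c 1).toReal with hcr
      have hcrpos : 0 < cr := ENNReal.toReal_pos hmin0 hmintop
      refine ⟨Real.sqrt cr, Real.sqrt_pos.mpr hcrpos, ?_⟩
      have h1 : ENNReal.ofReal (Real.sqrt cr ^ 2) = min c 1 := by
        rw [Real.sq_sqrt hcrpos.le, hcr, ENNReal.ofReal_toReal hmintop]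
      rw [h1]
      have h2 : 2 * min c 1 * μ K ≤ 2 * c * μ K := by
        gcongr
        exact min_le_left _ _
      refine h2.trans ?_
      have h3 : (2:ℝ≥0∞) * c * μ K = c * (2 * μ K) := by ring
      rw [h3, hc]
      rw [ENNReal.div_mul_cancel
        (by simp [hK0]) (ENNReal.mul_ne_top (by norm_num) hKfin)]
  -- enumeration of ℤ
  set enum : ℕ → ℤ := fun i => if i % 2 = 0 then ((i : ℤ) / 2) else (-((i : ℤ) / 2) - 1)
    with henum
  have henum_surj : ∀ k : ℤ, ∃ i : ℕ, enum i = k := by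
    intro k
    rcases le_or_gt 0 k with hk | hk
    · refine ⟨2 * k.toNat, ?_⟩
      simp only [henum]
      rw [if_pos (by omega)]
      push_cast
      omega
    · refine ⟨2 * (-k - 1).toNat + 1, ?_⟩
      simp only [henum]
      rw [if_neg (by omega)]
      push_cast
      omega
  have henum_abs_ge : ∀ i : ℕ, (i / 2 : ℕ) ≤ (enum i).natAbs := by
    intro i
    simp only [henum]
    split <;> omega
  have henum_abs_le : ∀ i : ℕ, (enum i).natAbs ≤ i / 2 + 1 := by
    intro i
    simp only [henum]
    split <;> omega
  -- bands
  set V : ℤ → Set α := fun k => {z ∈ K | u z ∈ Set.Ico (δ' * (k : ℝ)) (δ' * ((k : ℝ) + 1))}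
    with hV
  have hVmem : ∀ z ∈ K, z ∈ V ⌊u z / δ'⌋ := by
    intro z hz
    have hfl : ((⌊u z / δ'⌋ : ℤ) : ℝ) ≤ u z / δ' := Int.floor_le _
    have hfl2 := Int.lt_floor_add_one (u z / δ')
    refine ⟨hz, ?_, ?_⟩
    · calc δ' * ((⌊u z / δ'⌋ : ℤ) : ℝ) ≤ δ' * (u z / δ') := by nlinarith
        _ = u z := by field_simp
    · calc u z = δ' * (u z / δ') := by field_simp
        _ < δ' * (((⌊u z / δ'⌋ : ℤ) : ℝ) + 1) := by nlinarith
  -- hulls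
  set μK := μ.restrict K with hμK
  have hμKuniv : μK Set.univ = μ K := by
    rw [hμK, Measure.restrict_apply_univ]
  set H : ℕ → Set α := fun i => toMeasurable μK (V (enum i)) ∩ K with hH
  have hHmeas : ∀ i, MeasurableSet (H i) := fun i => (measurableSet_toMeasurable _ _).inter hK
  have hVH : ∀ i, V (enum i) ⊆ H i := fun i z hz => ⟨subset_toMeasurable _ _ hz, hz.1⟩
  have hHK : ∀ i, H i ⊆ K := fun i => Set.inter_subset_right
  have hHnull : ∀ i, ∀ S : Set α, MeasurableSet S → S ⊆ H i \ V (enum i) → μK S = 0 := by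
    intro i S hSm hSsub
    set tM := toMeasurable μK (V (enum i)) with htM
    have h1 : μK tM = μK (V (enum i)) := measure_toMeasurable _
    have h4 : S ⊆ tM := fun z hz => (hSsub hz).1.1
    have h2 : V (enum i) ⊆ tM \ S := by
      intro z hz
      exact ⟨subset_toMeasurable _ _ hz, fun hzS => (hSsub hzS).2 hz⟩
    have hSfin : μK S ≠ ∞ := by
      refine ne_top_of_le_ne_top ?_ (measure_mono (Set.subset_univ S))
      rw [hμKuniv]; exact hKfin
    have htMfin : μK tM ≠ ∞ := by
      refine ne_top_of_le_ne_top ?_ (measure_mono (Set.subset_univ tM))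
      rw [hμKuniv]; exact hKfin
    have h5 : μK (tM \ S) = μK tM - μK S :=
      measure_diff h4 hSm.nullMeasurableSet hSfin
    have h6 : μK tM ≤ μK tM - μK S := by
      calc μK tM = μK (V (enum i)) := h1
        _ ≤ μK (tM \ S) := measure_mono h2
        _ = μK tM - μK S := h5
    by_contra hS0
    have h7 : μK tM - μK S < μK tM := ENNReal.sub_lt_self htMfin
      (fun h0 => hS0 (le_antisymm (h0 ▸ measure_mono h4) (zero_le))) hS0
    exact absurd h6 (not_le.mpr h7)
  -- greedy partition
  set W : ℕ → Set α := fun i => H i \ ⋃ (i' : ℕ) (_ : i' < i), H i' with hW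
  have hWmeas : ∀ i, MeasurableSet (W i) :=
    fun i => (hHmeas i).diff
      (MeasurableSet.iUnion fun i' => MeasurableSet.iUnion fun _ => hHmeas i')
  have hWH : ∀ i, W i ⊆ H i := fun i => Set.diff_subset
  have hWK : ∀ i, W i ⊆ K := fun i => (hWH i).trans (hHK i)
  have hWuniq : ∀ z i i', z ∈ W i → z ∈ W i' → i = i' := by
    intro z i i' h1 h2
    by_contra hne
    rcases Nat.lt_or_ge i i' with h | h
    · exact h2.2 (Set.mem_iUnion₂.mpr ⟨i, h, hWH i h1⟩)
    · have h' : i' < i := lt_of_le_of_ne h (Ne.symm hne)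
      exact h1.2 (Set.mem_iUnion₂.mpr ⟨i', h', hWH i' h2⟩)
  have hWnotV : ∀ z i, z ∈ W i → ∀ i' < i, z ∉ V (enum i') := by
    intro z i hz i' hi' hzV
    exact hz.2 (Set.mem_iUnion₂.mpr ⟨i', hi', hVH i' hzV⟩)
  have hWcover : ∀ z ∈ K, ∃ i, z ∈ W i := by
    intro z hz
    obtain ⟨i₀, hi₀⟩ := henum_surj ⌊u z / δ'⌋
    have hzH : z ∈ H i₀ := hVH i₀ (by rw [hi₀]; exact hVmem z hz)
    have hex : ∃ i, z ∈ H i := ⟨i₀, hzH⟩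
    refine ⟨Nat.find hex, Nat.find_spec hex, ?_⟩
    intro hmem
    obtain ⟨i', hi'⟩ := Set.mem_iUnion.mp hmem
    obtain ⟨hlt, hzi'⟩ := Set.mem_iUnion.mp hi'
    exact Nat.find_min hex hlt hzi'
  -- the level function and g₀
  set lvl : α → ℕ := fun z => if h : ∃ i, z ∈ W i then Nat.find h + 1 else 0 with hlvl
  have hlvl_eq : ∀ {z : α} {i : ℕ}, z ∈ W i → lvl z = i + 1 := by
    intro z i hzi
    have hex : ∃ j, z ∈ W j := ⟨i, hzi⟩
    simp only [hlvl]
    rw [dif_pos hex]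
    congr 1
    exact hWuniq z (Nat.find hex) i (Nat.find_spec hex) hzi
  have hfib : ∀ i : ℕ, lvl ⁻¹' {i + 1} = W i := by
    intro i
    ext z
    simp only [Set.mem_preimage, Set.mem_singleton_iff]
    constructor
    · intro h
      by_cases hex : ∃ j, z ∈ W j
      · obtain ⟨j, hj⟩ := hex
        have hj' := hlvl_eq hj
        rw [hj'] at h
        have : j = i := by omega
        exact this ▸ hj
      · simp only [hlvl, dif_neg hex] at h
        omega
    · intro h; exact hlvl_eq h
  have hfib0 : lvl ⁻¹' {0} = (⋃ i, W i)ᶜ := by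
    ext z
    simp only [Set.mem_preimage, Set.mem_singleton_iff, Set.mem_compl_iff, Set.mem_iUnion]
    constructor
    · intro h hex
      obtain ⟨i, hi⟩ := hex
      rw [hlvl_eq hi] at h
      omega
    · intro h
      simp only [hlvl, dif_neg h]
  have hlvl_meas : Measurable lvl := by
    apply measurable_to_nat
    intro z
    rcases h : lvl z with _ | i
    · rw [hfib0]
      exact (MeasurableSet.iUnion hWmeas).compl
    · rw [hfib i]
      exact hWmeas i
  set g₀ : α → ℝ :=
    (fun m : ℕ => if m = 0 then (0 : ℝ) else δ' * ((enum (m - 1) : ℤ) : ℝ)) ∘ lvl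
    with hg₀
  have hg₀meas : Measurable g₀ := measurable_from_top.comp hlvl_meas
  have hg₀_eq : ∀ {z : α} {i : ℕ}, z ∈ W i → g₀ z = δ' * ((enum i : ℤ) : ℝ) := by
    intro z i hz
    simp only [hg₀, Function.comp_apply, hlvl_eq hz]
    norm_num
  have hg₀_zero : ∀ z : α, (¬ ∃ i, z ∈ W i) → g₀ z = 0 := by
    intro z h
    simp only [hg₀, Function.comp_apply, hlvl, dif_neg h]
    norm_num
  -- pointwise facts
  have hGood : ∀ z i, z ∈ W i → z ∈ V (enum i) → |u z - g₀ z| ≤ δ' := by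
    intro z i hw hv
    rw [hg₀_eq hw]
    obtain ⟨-, h1, h2⟩ := hv
    rw [abs_le]
    constructor
    · nlinarith
    · nlinarith
  have hLow : ∀ z i, z ∈ W i → δ' * ((i / 2 : ℕ) : ℝ) - δ' ≤ |u z| := by
    intro z i hw
    have hzK : z ∈ K := hWK i hw
    set k := ⌊u z / δ'⌋ with hk
    have hzV : z ∈ V k := hVmem z hzK
    obtain ⟨i'', hi''⟩ := henum_surj k
    have hge : i ≤ i'' := by
      by_contra h
      push_neg at h
      exact hWnotV z i hw i'' h (by rw [hi'']; exact hzV)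
    have habs : (i / 2 : ℕ) ≤ k.natAbs := by
      calc (i / 2 : ℕ) ≤ i'' / 2 := Nat.div_le_div_right hge
        _ ≤ (enum i'').natAbs := henum_abs_ge i''
        _ = k.natAbs := by rw [hi'']
    obtain ⟨-, h1, h2⟩ := hzV
    have hband : δ' * ((k.natAbs : ℝ) - 1) ≤ |u z| := by
      rcases le_or_gt 0 k with hk0 | hk0
      · have hc : ((k.natAbs : ℝ)) = (k : ℝ) := by
          rw [Nat.cast_natAbs]
          exact_mod_cast abs_of_nonneg hk0
        have hkR : (0:ℝ) ≤ (k : ℝ) := by exact_mod_cast hk0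
        have hu0 : 0 ≤ u z := le_trans (by nlinarith) h1
        rw [abs_of_nonneg hu0, hc]
        nlinarith
      · have hc : ((k.natAbs : ℝ)) = -(k : ℝ) := by
          rw [Nat.cast_natAbs]
          exact_mod_cast abs_of_neg hk0
        have hk1 : (k : ℝ) + 1 ≤ 0 := by
          have : k + 1 ≤ 0 := by omega
          exact_mod_cast this
        have hu0 : u z < 0 := lt_of_lt_of_le h2 (by nlinarith)
        rw [abs_of_neg hu0, hc]
        nlinarith
    have hle2 : ((i / 2 : ℕ) : ℝ) ≤ (k.natAbs : ℝ) := by exact_mod_cast habs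
    nlinarith
  have hg₀bd : ∀ z, |g₀ z| ≤ |u z| + 2 * δ' := by
    intro z
    by_cases hex : ∃ i, z ∈ W i
    · obtain ⟨i, hi⟩ := hex
      rw [hg₀_eq hi, abs_mul, abs_of_pos hδ'pos]
      have h1 : |((enum i : ℤ) : ℝ)| = ((enum i).natAbs : ℝ) := by
        rw [Nat.cast_natAbs, Int.cast_abs]
      have h2 : ((enum i).natAbs : ℝ) ≤ ((i / 2 : ℕ) : ℝ) + 1 := by
        exact_mod_cast henum_abs_le i
      have h3 := hLow z i hi
      rw [h1]
      nlinarith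
    · rw [hg₀_zero z hex]
      simp only [abs_zero]
      positivity
  -- L² bound for g₀
  have hg₀L2 : ∫⁻ z in K, (‖g₀ z‖₊ : ℝ≥0∞) ^ 2 ∂μ ≠ ∞ := by
    have hpt : ∀ z, (‖g₀ z‖₊ : ℝ≥0∞) ^ 2
        ≤ 2 * (‖u z‖₊ : ℝ≥0∞) ^ 2 + ENNReal.ofReal (2 * (2 * δ') ^ 2) := by
      intro z
      rw [nnnorm_sq_eq_ofReal, nnnorm_sq_eq_ofReal]
      have hb : (g₀ z) ^ 2 ≤ 2 * (u z) ^ 2 + 2 * (2 * δ') ^ 2 := by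
        nlinarith [hg₀bd z, abs_nonneg (u z), sq_abs (g₀ z), sq_abs (u z), hδ'pos,
          abs_nonneg (g₀ z), sq_nonneg (|u z| - 2 * δ')]
      calc ENNReal.ofReal ((g₀ z) ^ 2)
          ≤ ENNReal.ofReal (2 * (u z) ^ 2 + 2 * (2 * δ') ^ 2) := ENNReal.ofReal_le_ofReal hb
        _ = ENNReal.ofReal (2 * (u z) ^ 2) + ENNReal.ofReal (2 * (2 * δ') ^ 2) := by
            rw [ENNReal.ofReal_add] <;> positivity
        _ = 2 * ENNReal.ofReal ((u z) ^ 2) + ENNReal.ofReal (2 * (2 * δ') ^ 2) := by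
            rw [ENNReal.ofReal_mul (by norm_num : (0:ℝ) ≤ 2)]
            norm_num
    refine ne_top_of_le_ne_top ?_ (lintegral_mono hpt)
    rw [lintegral_add_right _ measurable_const]
    apply ENNReal.add_ne_top.mpr
    constructor
    · refine ne_top_of_le_ne_top ?_ (lintegral_const_mul_le' 2 _ (by norm_num))
      exact ENNReal.mul_ne_top (by norm_num) hF
    · rw [lintegral_const]
      exact ENNReal.mul_ne_top ENNReal.ofReal_ne_top
        (by rw [Measure.restrict_apply_univ]; exact hKfin)
  -- clamping
  set gN : ℕ → α → ℝ := fun N z => max (min (g₀ z) (N : ℝ)) (-(N : ℝ)) with hgN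
  have hgN_meas : ∀ N, Measurable (gN N) :=
    fun N => (hg₀meas.min measurable_const).max measurable_const
  have hdiff_le : ∀ (N : ℕ) z, |g₀ z - gN N z| ≤ |g₀ z| := by
    intro N z
    have hN0 : (0:ℝ) ≤ (N : ℝ) := Nat.cast_nonneg N
    simp only [hgN]
    rcases le_total (g₀ z) (N : ℝ) with h1 | h1
    · rcases le_total (-(N : ℝ)) (g₀ z) with h2 | h2
      · rw [min_eq_left h1, max_eq_left h2, sub_self, abs_zero]
        exact abs_nonneg _
      · rw [min_eq_left h1, max_eq_right h2]
        have hg0 : g₀ z ≤ 0 := le_trans h2 (by linarith)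
        rw [abs_of_nonpos hg0, abs_of_nonpos (by linarith : g₀ z - -(N:ℝ) ≤ 0)]
        linarith
    · rw [min_eq_right h1, max_eq_left (by linarith : -(N:ℝ) ≤ (N:ℝ))]
      have hg0 : 0 ≤ g₀ z := le_trans hN0 h1
      rw [abs_of_nonneg (by linarith : (0:ℝ) ≤ g₀ z - N), abs_of_nonneg hg0]
      linarith
  have hdiff_zero : ∀ (z : α) (N : ℕ), |g₀ z| ≤ (N : ℝ) → g₀ z - gN N z = 0 := by
    intro z N h
    rw [abs_le] at h
    simp only [hgN]
    rw [min_eq_left h.2, max_eq_left h.1, sub_self]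
  set T : ℕ → ℝ≥0∞ := fun N => ∫⁻ z in K, (‖g₀ z - gN N z‖₊ : ℝ≥0∞) ^ 2 ∂μ with hT
  have hTtend : Filter.Tendsto T Filter.atTop (nhds 0) := by
    have h0 : (0 : ℝ≥0∞) = ∫⁻ z in K, (fun _ : α => (0:ℝ≥0∞)) z ∂μ := by simp
    rw [hT, h0]
    apply tendsto_lintegral_of_dominated_convergence (bound := fun z => (‖g₀ z‖₊ : ℝ≥0∞) ^ 2)
    · intro N
      exact ((hg₀meas.sub (hgN_meas N)).nnnorm.coe_nnreal_ennreal).pow_const 2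
    · intro N
      refine Filter.Eventually.of_forall fun z => ?_
      show (‖g₀ z - gN N z‖₊ : ℝ≥0∞) ^ 2 ≤ (‖g₀ z‖₊ : ℝ≥0∞) ^ 2
      rw [nnnorm_sq_eq_ofReal, nnnorm_sq_eq_ofReal]
      apply ENNReal.ofReal_le_ofReal
      have h := hdiff_le N z
      nlinarith [abs_nonneg (g₀ z - gN N z), abs_nonneg (g₀ z),
        sq_abs (g₀ z - gN N z), sq_abs (g₀ z)]
    · exact hg₀L2
    · refine Filter.Eventually.of_forall fun z => ?_
      apply Filter.Tendsto.congr' ?_ tendsto_const_nhds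
      filter_upwards [Filter.eventually_ge_atTop ⌈|g₀ z|⌉₊] with N hN
      have hz : g₀ z - gN N z = 0 :=
        hdiff_zero z N (le_trans (Nat.le_ceil _) (by exact_mod_cast hN))
      rw [hz]
      simp
  obtain ⟨N, hN⟩ : ∃ N : ℕ, 2 * T N < β := by
    have hβ4 : (0:ℝ≥0∞) < β / 2 / 2 := by
      apply lt_of_le_of_ne (zero_le)
      intro h
      symm at h
      rcases ENNReal.div_eq_zero_iff.mp h with h | h
      · rcases ENNReal.div_eq_zero_iff.mp h with h | h
        · exact hβ0 h
        · exact (by norm_num : (2:ℝ≥0∞) ≠ ∞) h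
      · exact (by norm_num : (2:ℝ≥0∞) ≠ ∞) h
    obtain ⟨N, hN⟩ := (ENNReal.tendsto_atTop_zero.mp hTtend (β / 2 / 2) hβ4)
    refine ⟨N, ?_⟩
    calc 2 * T N ≤ 2 * (β / 2 / 2) := by
          exact mul_le_mul_right (hN N le_rfl) 2
      _ = (β / 2 / 2) * 2 := mul_comm _ _
      _ = β / 2 := ENNReal.div_mul_cancel (by norm_num) (by norm_num)
      _ < β := ENNReal.half_lt_self hβ0 hβtop
  -- the data
  set g : α → ℝ := gN N with hgdef
  set e : α → ℝ≥0∞ :=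
    fun z => 2 * ENNReal.ofReal (δ' ^ 2) + 2 * (‖g₀ z - g z‖₊ : ℝ≥0∞) ^ 2 with he
  have hemeas : Measurable e := by
    refine Measurable.add (f := fun _ => 2 * ENNReal.ofReal (δ' ^ 2)) (g := fun z => 2 * (‖g₀ z - g z‖₊ : ℝ≥0∞) ^ 2) measurable_const ?_
    exact (((hg₀meas.sub (hgN_meas N)).nnnorm.coe_nnreal_ennreal).pow_const 2).const_mul 2
  have hIe : ∫⁻ z in K, e z ∂μ < η := by
    have h1 : ∫⁻ z in K, e z ∂μ
        = 2 * ENNReal.ofReal (δ' ^ 2) * (μ K) + 2 * T N := by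
      rw [he]
      rw [lintegral_add_left measurable_const]
      congr 1
      · rw [lintegral_const, Measure.restrict_apply_univ]
      · rw [hT, lintegral_const_mul]
        exact ((hg₀meas.sub (hgN_meas N)).nnnorm.coe_nnreal_ennreal).pow_const 2
    rw [h1]
    calc 2 * ENNReal.ofReal (δ' ^ 2) * μ K + 2 * T N < β + β :=
          ENNReal.add_lt_add_of_le_of_lt (ne_top_of_le_ne_top hβtop hδ'small) hδ'small hN
      _ < η := hββ
  refine ⟨g, hgN_meas N, ⟨(N : ℝ), fun x => ?_⟩, fun x hx => ?_, e, hemeas, hIe, ?_⟩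
  · -- boundedness
    have hN0 : (0:ℝ) ≤ (N : ℝ) := Nat.cast_nonneg N
    rw [Real.norm_eq_abs, abs_le]
    constructor
    · exact le_max_right _ _
    · apply max_le _ (by linarith)
      exact le_trans (min_le_right _ _) le_rfl
  · -- support
    have hnW : ¬ ∃ i, x ∈ W i := by
      rintro ⟨i, hi⟩
      exact hx (hWK i hi)
    have h0 : g₀ x = 0 := hg₀_zero x hnW
    simp only [hgdef, hgN, h0]
    rw [min_eq_left (Nat.cast_nonneg N), max_eq_left]
    simp
  · -- the main estimate
    intro A hA hAK
    set Z : Set α := (⋃ i, W i \ V (enum i)) ∪ Kᶜ with hZ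
    set Q : α → ℝ≥0∞ :=
      fun z => if z ∈ Z then 2 * (‖u z - g₀ z‖₊ : ℝ≥0∞) ^ 2 else 0 with hQ
    have hpt : ∀ z, (‖u z - g z‖₊ : ℝ≥0∞) ^ 2 ≤ Q z + e z := by
      intro z
      have h1 := nnnorm_sub_sq_le (u z) (g₀ z) (g z)
      by_cases hz : z ∈ Z
      · simp only [hQ, if_pos hz]
        calc (‖u z - g z‖₊ : ℝ≥0∞) ^ 2
            ≤ 2 * (‖u z - g₀ z‖₊ : ℝ≥0∞) ^ 2 + 2 * (‖g₀ z - g z‖₊ : ℝ≥0∞) ^ 2 := h1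
          _ ≤ 2 * (‖u z - g₀ z‖₊ : ℝ≥0∞) ^ 2 + e z := by
              apply add_le_add_right
              rw [he]
              exact le_add_self
      · have hzK : z ∈ K := by
          by_contra h
          exact hz (Or.inr h)
        obtain ⟨i, hi⟩ := hWcover z hzK
        have hzV : z ∈ V (enum i) := by
          by_contra h
          exact hz (Or.inl (Set.mem_iUnion.mpr ⟨i, hi, h⟩))
        have hgd := hGood z i hi hzV
        have h2 : (‖u z - g₀ z‖₊ : ℝ≥0∞) ^ 2 ≤ ENNReal.ofReal (δ' ^ 2) := by
          rw [nnnorm_sq_eq_ofReal]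
          apply ENNReal.ofReal_le_ofReal
          nlinarith [abs_nonneg (u z - g₀ z), sq_abs (u z - g₀ z)]
        calc (‖u z - g z‖₊ : ℝ≥0∞) ^ 2
            ≤ 2 * (‖u z - g₀ z‖₊ : ℝ≥0∞) ^ 2 + 2 * (‖g₀ z - g z‖₊ : ℝ≥0∞) ^ 2 := h1
          _ ≤ 2 * ENNReal.ofReal (δ' ^ 2) + 2 * (‖g₀ z - g z‖₊ : ℝ≥0∞) ^ 2 := by gcongr
          _ = e z := rfl
          _ ≤ Q z + e z := le_add_self
    have hZnull : ∀ S : Set α, MeasurableSet S → S ⊆ Z → (μ.restrict A) S = 0 := by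
      intro S hS hsub
      rw [Measure.restrict_apply hS]
      have hcov : S ∩ A ⊆ ⋃ i, (S ∩ A) ∩ W i := by
        intro z hz
        obtain ⟨i, hi⟩ := hWcover z (hAK hz.2)
        exact Set.mem_iUnion.mpr ⟨i, hz, hi⟩
      have hle : μ (S ∩ A) ≤ ∑' i, μ ((S ∩ A) ∩ W i) :=
        (measure_mono hcov).trans (measure_iUnion_le _)
      have hzero : ∀ i, μ ((S ∩ A) ∩ W i) = 0 := by
        intro i
        have hsub2 : (S ∩ A) ∩ W i ⊆ H i \ V (enum i) := by
          intro z hz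
          have hzZ : z ∈ Z := hsub hz.1.1
          have hzK : z ∈ K := hAK hz.1.2
          rcases hzZ with h | h
          · obtain ⟨i', hi'⟩ := Set.mem_iUnion.mp h
            have heq : i' = i := hWuniq z i' i hi'.1 hz.2
            exact ⟨hWH i hz.2, (heq ▸ hi').2⟩
          · exact absurd hzK h
        have hmeas2 : MeasurableSet ((S ∩ A) ∩ W i) := (hS.inter hA).inter (hWmeas i)
        have h0 := hHnull i _ hmeas2 hsub2
        rw [hμK, Measure.restrict_apply hmeas2] at h0
        have hKsub : ((S ∩ A) ∩ W i) ∩ K = (S ∩ A) ∩ W i :=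
          Set.inter_eq_self_of_subset_left (fun z hz => hWK i hz.2)
        rw [hKsub] at h0
        exact h0
      have : (∑' i, μ ((S ∩ A) ∩ W i)) = 0 := by
        simp [hzero]
      exact le_antisymm (this ▸ hle) (zero_le)
    calc ∫⁻ z in A, (‖u z - g z‖₊ : ℝ≥0∞) ^ 2 ∂μ
        ≤ ∫⁻ z in A, (Q z + e z) ∂μ := lintegral_mono hpt
      _ = ∫⁻ z in A, Q z ∂μ + ∫⁻ z in A, e z ∂μ := lintegral_add_right _ hemeas
      _ = 0 + ∫⁻ z in A, e z ∂μ := by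
          rw [lintegral_innernull_zero hZnull (fun z hz => if_neg hz)]
      _ = ∫⁻ z in A, e z ∂μ := zero_add _

end Approx

section MainAux
variable {n : ℕ}

lemma setLIntegral_congr_on {α : Type*} [MeasurableSpace α] {μ : Measure α} {s : Set α}
    (hs : MeasurableSet s) {f g : α → ℝ≥0∞} (h : ∀ y ∈ s, f y = g y) :
    ∫⁻ a in s, f a ∂μ = ∫⁻ a in s, g a ∂μ :=
  le_antisymm (setLIntegral_mono_on' hs fun y hy => (h y hy).le)
    (setLIntegral_mono_on' hs fun y hy => (h y hy).ge)

lemma rpow_add_le_two_rpow (a b : ℝ≥0∞) {p : ℝ} (hp : 0 ≤ p) :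
    (a + b) ^ p ≤ 2 ^ p * (a ^ p + b ^ p) := by
  have h1 : a + b ≤ 2 * max a b := by
    rcases le_total a b with h | h
    · rw [max_eq_right h]
      calc a + b ≤ b + b := by gcongr
        _ = 2 * b := (two_mul b).symm
    · rw [max_eq_left h]
      calc a + b ≤ a + a := by gcongr
        _ = 2 * a := (two_mul a).symm
  calc (a + b) ^ p ≤ (2 * max a b) ^ p := ENNReal.rpow_le_rpow h1 hp
    _ = 2 ^ p * (max a b) ^ p := ENNReal.mul_rpow_of_nonneg _ _ hp
    _ ≤ 2 ^ p * (a ^ p + b ^ p) := by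
        gcongr
        rcases le_total a b with h | h
        · rw [max_eq_right h]; exact le_add_self
        · rw [max_eq_left h]; exact le_self_add

lemma ennreal_mul_div_cancel_left {a : ℝ≥0∞} (b : ℝ≥0∞) (h0 : a ≠ 0) (ht : a ≠ ∞) :
    a * b / a = b := by
  rw [div_eq_mul_inv, mul_comm a b, mul_assoc, ENNReal.mul_inv_cancel h0 ht, mul_one]

lemma measurable_measure_ball' (ν : Measure (Eucl n)) [SFinite ν] (q : ℝ) :
    Measurable fun x : Eucl n => ν (ball x q) := by
  have hS : MeasurableSet {p : Eucl n × Eucl n | dist p.2 p.1 < q} := by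
    have : IsOpen {p : Eucl n × Eucl n | dist p.2 p.1 < q} :=
      isOpen_lt (continuous_dist.comp (continuous_snd.prodMk continuous_fst)) continuous_const
    exact this.measurableSet
  have key : ∀ x, ν (ball x q)
      = ∫⁻ z, ({p : Eucl n × Eucl n | dist p.2 p.1 < q}.indicator
          (fun _ => (1 : ℝ≥0∞))) (x, z) ∂ν := by
    intro x
    have h2 : ∀ z, ({p : Eucl n × Eucl n | dist p.2 p.1 < q}.indicator
        (fun _ => (1 : ℝ≥0∞))) (x, z) = (ball x q).indicator (fun _ => (1:ℝ≥0∞)) z := by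
      intro z
      by_cases hz : z ∈ ball x q
      · rw [Set.indicator_of_mem hz, Set.indicator_of_mem (by exact hz)]
      · rw [Set.indicator_of_notMem hz, Set.indicator_of_notMem (by exact hz)]
    simp only [h2]
    rw [lintegral_indicator_const measurableSet_ball, one_mul]
  simp only [key]
  exact Measurable.lintegral_prod_right ((measurable_one).indicator hS)

lemma bdist_pos_of_mem {Ω : Set (Eucl n)} (hΩo : IsOpen Ω)
    (hfr : (frontier Ω).Nonempty) {y : Eucl n} (hy : y ∈ Ω) : 0 < bdist Ω y := by
  unfold bdist
  rw [← IsClosed.notMem_iff_infDist_pos isClosed_frontier hfr]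
  intro hmem
  rw [hΩo.frontier_eq] at hmem
  exact hmem.2 hy

lemma ball_quarter_subset {Ω : Set (Eucl n)} (hΩo : IsOpen Ω)
    (hfr : (frontier Ω).Nonempty) {y : Eucl n} (hy : y ∈ Ω) :
    ball y (bdist Ω y / 4) ⊆ Ω := by
  have hpos := bdist_pos_of_mem hΩo hfr hy
  refine (ball_subset_ball ?_).trans (ball_bdist_subset hΩo hy)
  unfold bdist at hpos ⊢
  linarith

end MainAux


set_option maxHeartbeats 4000000 in
/-- **Lemma 2.3**: `L^∞_c(Ω)` is dense in the tent space `T̃₁^p(Ω)`. -/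
theorem Linfc_dense_in_tent {n : ℕ} (hn : 2 ≤ n)
    (Ω : Set (Eucl n)) (hΩ : BoundedOneSidedCAD n Ω)
    (p : ℝ) (hp : 1 ≤ p) :
    ∀ u : Eucl n → ℝ, MemL2loc Ω u → lpnorm (carleson Ω u) p (sm n Ω) < ∞ →
      ∀ ε > (0:ℝ), ∃ g : Eucl n → ℝ, MemLinfc Ω g ∧
        lpnorm (carleson Ω fun x => u x - g x) p (sm n Ω) < ENNReal.ofReal ε := by
  classical
  obtain ⟨hΩo, hΩconn, hΩbdd, hCork, hHarn, hAhl⟩ := hΩ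
  intro u hu hfin ε hε
  have hp0 : (0:ℝ) < p := lt_of_lt_of_le one_pos hp
  have hp0' : p ≠ 0 := ne_of_gt hp0
  have hip : (0:ℝ) < 1 / p := by positivity
  set D := Metric.diam (frontier Ω) with hD
  by_cases hDpos : 0 < D
  swap
  · -- degenerate case : empty range of radii
    have hzero : ∀ (v : Eucl n → ℝ) (x : Eucl n), carleson Ω v x = 0 := by
      intro v x
      unfold carleson
      rw [← hD]
      have hempty : Set.Ioo (0:ℝ) D = ∅ := Set.Ioo_eq_empty hDpos
      rw [hempty]
      simp
    refine ⟨0, ⟨measurable_const, ⟨0, fun x => by simp⟩, ∅, isCompact_empty,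
      Set.empty_subset _, fun x _ => rfl⟩, ?_⟩
    unfold lpnorm
    have hz : ∀ x, carleson Ω (fun x => u x - (0:Eucl n → ℝ) x) x ^ p = 0 := by
      intro x
      rw [hzero]
      exact ENNReal.zero_rpow_of_pos hp0
    rw [lintegral_congr hz, lintegral_zero, ENNReal.zero_rpow_of_pos hip]
    exact ENNReal.ofReal_pos.mpr hε
  -- main case
  obtain ⟨C, hCpos, hAhl'⟩ := hAhl
  rw [← hD] at hAhl'
  have hfrne : (frontier Ω).Nonempty := by
    rcases Set.eq_empty_or_nonempty (frontier Ω) with h | h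
    · exfalso; rw [hD, h, Metric.diam_empty] at hDpos; exact lt_irrefl 0 hDpos
    · exact h
  have hfrmeas : MeasurableSet (frontier Ω) := isClosed_frontier.measurableSet
  have hΩmeas : MeasurableSet Ω := hΩo.measurableSet
  have hfrbdd : Bornology.IsBounded (frontier Ω) := by
    refine (hΩbdd.closure).subset ?_
    rw [hΩo.frontier_eq]; exact Set.diff_subset
  have hfrcomp : IsCompact (frontier Ω) := isCompact_of_isClosed_isBounded isClosed_frontier hfrbdd
  -- Ahlfors-derived ball bounds
  have hσball_low : ∀ x ∈ frontier Ω, ∀ r : ℝ, 0 < r → r < D →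
      ENNReal.ofReal (C⁻¹ * r ^ ((n:ℝ) - 1)) ≤ sm n Ω (ball x r) := by
    intro x hx r h1 h2
    exact (hAhl' x hx r ⟨h1, h2⟩).1
  have hσball_up : ∀ x ∈ frontier Ω, ∀ r : ℝ, 0 < r → r < D →
      sm n Ω (ball x r) ≤ ENNReal.ofReal (C * r ^ ((n:ℝ) - 1)) := by
    intro x hx r h1 h2
    exact (hAhl' x hx r ⟨h1, h2⟩).2
  have hσball_pos : ∀ x ∈ frontier Ω, ∀ r : ℝ, 0 < r → r < D → 0 < sm n Ω (ball x r) := by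
    intro x hx r h1 h2
    refine lt_of_lt_of_le ?_ (hσball_low x hx r h1 h2)
    apply ENNReal.ofReal_pos.mpr
    have : 0 < r ^ ((n:ℝ) - 1) := Real.rpow_pos_of_pos h1 _
    positivity
  have hσball_fin : ∀ x ∈ frontier Ω, ∀ r : ℝ, 0 < r → r < D → sm n Ω (ball x r) < ∞ := by
    intro x hx r h1 h2
    exact lt_of_le_of_lt (hσball_up x hx r h1 h2) ENNReal.ofReal_lt_top
  -- σ is a finite measure
  have hσuniv_eq : sm n Ω Set.univ = μH[(n:ℝ)-1] (frontier Ω) := by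
    unfold sm
    rw [Measure.restrict_apply_univ]
  have hσfr : sm n Ω (frontier Ω) = sm n Ω Set.univ := by
    unfold sm
    rw [Measure.restrict_apply_univ, Measure.restrict_apply' hfrmeas, Set.inter_self]
  have hσfin : sm n Ω Set.univ < ∞ := by
    have hcov : frontier Ω ⊆ ⋃ x : frontier Ω, ball (x : Eucl n) (D/2) := by
      intro x hx
      exact Set.mem_iUnion.mpr ⟨⟨x, hx⟩, mem_ball_self (by linarith)⟩
    obtain ⟨t, ht⟩ := hfrcomp.elim_finite_subcover
      (fun x : frontier Ω => ball (x : Eucl n) (D/2)) (fun _ => isOpen_ball) hcov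
    calc sm n Ω Set.univ = sm n Ω (frontier Ω) := hσfr.symm
      _ ≤ sm n Ω (⋃ x ∈ t, ball (x : Eucl n) (D/2)) := measure_mono ht
      _ ≤ ∑ x ∈ t, sm n Ω (ball (x : Eucl n) (D/2)) := measure_biUnion_finset_le t _
      _ ≤ ∑ _x ∈ t, ENNReal.ofReal (C * (D/2) ^ ((n:ℝ)-1)) := by
          refine Finset.sum_le_sum fun x _ => ?_
          exact hσball_up x x.2 (D/2) (by linarith) (by linarith)
      _ < ∞ := by
          rw [Finset.sum_const, nsmul_eq_mul]
          exact ENNReal.mul_lt_top (by simp) ENNReal.ofReal_lt_top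
  haveI hσfinI : IsFiniteMeasure (sm n Ω) := ⟨hσfin⟩
  have hσpos : 0 < sm n Ω Set.univ := by
    obtain ⟨x, hx⟩ := hfrne
    calc (0:ℝ≥0∞) < sm n Ω (ball x (D/2)) :=
          hσball_pos x hx (D/2) (by linarith) (by linarith)
      _ ≤ sm n Ω Set.univ := measure_mono (Set.subset_univ _)
  -- finiteness of the carleson p-integral
  have hIcarl : ∫⁻ x, carleson Ω u x ^ p ∂(sm n Ω) ≠ ∞ := by
    intro h
    unfold lpnorm at hfin
    rw [h, ENNReal.top_rpow_of_pos hip] at hfin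
    exact lt_irrefl _ hfin
  -- the density h and its total integrability
  set h : Eucl n → ℝ≥0∞ := fun y => avg2 Ω u y / ENNReal.ofReal (bdist Ω y) with hh
  have hIh : ∫⁻ y in Ω, h y ∂volume ≠ ∞ := by
    -- a good boundary point
    obtain ⟨x₀, hx₀fr, hx₀fin⟩ : ∃ x₀ ∈ frontier Ω, carleson Ω u x₀ < ∞ := by
      by_contra hno
      push_neg at hno
      have hpt : ∀ x, (frontier Ω).indicator (fun _ => (⊤:ℝ≥0∞)) x ≤ carleson Ω u x ^ p := by
        intro x
        by_cases hx : x ∈ frontier Ω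
        · rw [Set.indicator_of_mem hx]
          have h1 : carleson Ω u x = ⊤ := top_le_iff.mp (hno x hx)
          rw [h1, ENNReal.top_rpow_of_pos hp0]
        · rw [Set.indicator_of_notMem hx]; exact zero_le
      have h2 : (⊤:ℝ≥0∞) * sm n Ω Set.univ ≤ ∫⁻ x, carleson Ω u x ^ p ∂(sm n Ω) := by
        calc (⊤:ℝ≥0∞) * sm n Ω Set.univ = ⊤ * sm n Ω (frontier Ω) := by rw [hσfr]
          _ = ∫⁻ x, (frontier Ω).indicator (fun _ => (⊤:ℝ≥0∞)) x ∂(sm n Ω) :=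
              (lintegral_indicator_const hfrmeas ⊤).symm
          _ ≤ _ := lintegral_mono hpt
      rw [ENNReal.top_mul hσpos.ne'] at h2
      exact hIcarl (top_le_iff.mp h2)
    have hbound : ∀ r : ℝ, 0 < r → r < D →
        ∫⁻ y in ball x₀ r ∩ Ω, h y ∂volume ≤ sm n Ω (ball x₀ r) * carleson Ω u x₀ := by
      intro r h1 h2
      have hterm : (sm n Ω (ball x₀ r))⁻¹ * ∫⁻ y in ball x₀ r ∩ Ω, h y ∂volume
          ≤ carleson Ω u x₀ := by
        unfold carleson
        rw [← hD]
        exact le_iSup₂_of_le r ⟨h1, h2⟩ le_rfl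
      calc ∫⁻ y in ball x₀ r ∩ Ω, h y ∂volume
          = sm n Ω (ball x₀ r)
            * ((sm n Ω (ball x₀ r))⁻¹ * ∫⁻ y in ball x₀ r ∩ Ω, h y ∂volume) := by
            rw [← mul_assoc, ENNReal.mul_inv_cancel (hσball_pos x₀ hx₀fr r h1 h2).ne'
              (hσball_fin x₀ hx₀fr r h1 h2).ne, one_mul]
        _ ≤ sm n Ω (ball x₀ r) * carleson Ω u x₀ := mul_le_mul_right hterm _
    set Mb : ℝ≥0∞ := ENNReal.ofReal (C * D ^ ((n:ℝ)-1)) * carleson Ω u x₀ with hMb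
    have hMbfin : Mb ≠ ∞ := ENNReal.mul_ne_top ENNReal.ofReal_ne_top hx₀fin.ne
    have hrk1 : ∀ k : ℕ, 0 < D * (1 - 1/((k:ℝ)+2)) ∧ D * (1 - 1/((k:ℝ)+2)) < D := by
      intro k
      have hk0 : (0:ℝ) ≤ (k:ℝ) := Nat.cast_nonneg k
      have hk2 : (0:ℝ) < (k:ℝ) + 2 := by linarith
      have h12 : 1/((k:ℝ)+2) ≤ 1/2 := by
        apply one_div_le_one_div_of_le <;> linarith
      have hpos : (0:ℝ) < 1/((k:ℝ)+2) := by positivity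
      constructor
      · nlinarith
      · nlinarith
    have hbound2 : ∀ k : ℕ, ∫⁻ y in ball x₀ (D * (1 - 1/((k:ℝ)+2))) ∩ Ω, h y ∂volume ≤ Mb := by
      intro k
      obtain ⟨hr1, hr2⟩ := hrk1 k
      refine (hbound _ hr1 hr2).trans ?_
      rw [hMb]
      apply mul_le_mul_left
      refine (hσball_up x₀ hx₀fr _ hr1 hr2).trans ?_
      apply ENNReal.ofReal_le_ofReal
      have hexp : (0:ℝ) ≤ (n:ℝ) - 1 := by
        have : (2:ℝ) ≤ (n:ℝ) := by exact_mod_cast hn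
        linarith
      have h3 : (D * (1 - 1/((k:ℝ)+2))) ^ ((n:ℝ)-1) ≤ D ^ ((n:ℝ)-1) :=
        Real.rpow_le_rpow (le_of_lt hr1) (le_of_lt hr2) hexp
      nlinarith
    refine ne_top_of_le_ne_top hMbfin ?_
    have heq0 : (∫⁻ y in Ω, h y ∂volume) = ∫⁻ y, h y ∂(volume.restrict Ω) := rfl
    rw [heq0, ← iSup_lintegral_measurable_le_eq_lintegral]
    refine iSup_le fun g => iSup_le fun hgmeas => iSup_le fun hgle => ?_
    -- monotone exhaustion by balls
    set fk : ℕ → Eucl n → ℝ≥0∞ :=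
      fun k => (ball x₀ (D * (1 - 1/((k:ℝ)+2)))).indicator g with hfk
    have hfkmeas : ∀ k, Measurable (fk k) := fun k => hgmeas.indicator measurableSet_ball
    have hfkmono : Monotone fk := by
      intro k1 k2 hk z
      simp only [hfk]
      by_cases hz : z ∈ ball x₀ (D * (1 - 1/((k1:ℝ)+2)))
      · rw [Set.indicator_of_mem hz]
        have hsub : ball x₀ (D * (1 - 1/((k1:ℝ)+2))) ⊆ ball x₀ (D * (1 - 1/((k2:ℝ)+2))) := by
          apply ball_subset_ball
          have hk2' : (k1:ℝ) + 2 ≤ (k2:ℝ) + 2 := by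
            have : (k1:ℝ) ≤ (k2:ℝ) := by exact_mod_cast hk
            linarith
          have h1 : 1/((k2:ℝ)+2) ≤ 1/((k1:ℝ)+2) := by
            apply one_div_le_one_div_of_le
            · linarith [Nat.cast_nonneg (α := ℝ) k1]
            · exact hk2'
          nlinarith
        rw [Set.indicator_of_mem (hsub hz)]
      · rw [Set.indicator_of_notMem hz]
        exact zero_le
    have hgsup : ∀ z ∈ Ω, g z = ⨆ k, fk k z := by
      intro z hz
      have hdist : dist z x₀ < D := mem_omega_dist_lt_diam hΩo hΩbdd hx₀fr hz
      refine le_antisymm ?_ (iSup_le fun k => Set.indicator_le_self _ _ z)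
      obtain ⟨k, hk⟩ : ∃ k : ℕ, dist z x₀ < D * (1 - 1/((k:ℝ)+2)) := by
        obtain ⟨k, hk⟩ := exists_nat_gt (D / (D - dist z x₀))
        refine ⟨k, ?_⟩
        have hd2 : (0:ℝ) < D - dist z x₀ := by linarith
        have hk2 : (0:ℝ) < (k:ℝ) + 2 := by positivity
        have h1 : D / (D - dist z x₀) < (k:ℝ) + 2 := by
          have : (k:ℝ) ≤ (k:ℝ) + 2 := by linarith
          linarith
        have h2 : D < ((k:ℝ)+2) * (D - dist z x₀) := by
          rw [div_lt_iff₀ hd2] at h1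
          linarith
        have h4 : D * (1/((k:ℝ)+2)) < D - dist z x₀ := by
          rw [mul_one_div, div_lt_iff₀ hk2]
          nlinarith
        nlinarith
      calc g z = fk k z := (Set.indicator_of_mem (mem_ball.mpr hk) g).symm
        _ ≤ ⨆ k, fk k z := le_iSup (fun k => fk k z) k
    calc ∫⁻ y, g y ∂(volume.restrict Ω)
        = ∫⁻ y in Ω, (⨆ k, fk k y) ∂volume := by
          refine setLIntegral_congr_fun hΩmeas ?_
          intro y hy
          exact hgsup y hy
      _ = ⨆ k, ∫⁻ y in Ω, fk k y ∂volume := lintegral_iSup hfkmeas hfkmono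
      _ ≤ Mb := by
          refine iSup_le fun k => ?_
          have heq1 : ∫⁻ y in Ω, fk k y ∂volume
              = ∫⁻ y in ball x₀ (D * (1 - 1/((k:ℝ)+2))) ∩ Ω, g y ∂volume := by
            rw [hfk]
            rw [lintegral_indicator measurableSet_ball]
            rw [Measure.restrict_restrict measurableSet_ball]
          rw [heq1]
          refine le_trans (lintegral_mono hgle) (hbound2 k)
  -- the measurable core of h
  have hIh' : ∫⁻ y, h y ∂(volume.restrict Ω) ≠ ∞ := hIh
  obtain ⟨mh, hmh_meas, hmh_le, hmh_eq⟩ := exists_core (volume.restrict Ω) h hIh'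
  have hmh_eq' : ∀ A : Set (Eucl n), MeasurableSet A →
      ∫⁻ y in A ∩ Ω, h y ∂volume = ∫⁻ y in A, mh y ∂(volume.restrict Ω) := by
    intro A hA
    rw [← Measure.restrict_restrict hA]
    exact hmh_eq A hA
  set ν : Measure (Eucl n) := (volume.restrict Ω).withDensity mh with hνdef
  have hνA : ∀ A : Set (Eucl n), MeasurableSet A → ν A = ∫⁻ y in A ∩ Ω, h y ∂volume := by
    intro A hA
    rw [hνdef, withDensity_apply _ hA, ← hmh_eq' A hA]
  have hνuniv : ν Set.univ = ∫⁻ y in Ω, h y ∂volume := by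
    rw [hνA Set.univ MeasurableSet.univ, Set.univ_inter]
  haveI hνfinI : IsFiniteMeasure ν := ⟨by rw [hνuniv]; exact lt_top_iff_ne_top.mpr hIh⟩
  have hΩfr_empty : Ω ∩ frontier Ω = ∅ := by
    rw [hΩo.frontier_eq, Set.inter_diff_self]
  have hsing : ν ⟂ₘ sm n Ω := by
    refine ⟨Ωᶜ, hΩmeas.compl, ?_, ?_⟩
    · rw [hνA Ωᶜ hΩmeas.compl]
      have : Ωᶜ ∩ Ω = ∅ := Set.compl_inter_self Ω
      rw [this]
      simp
    · rw [compl_compl]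
      unfold sm
      rw [Measure.restrict_apply' hfrmeas, hΩfr_empty, measure_empty]
  have hae : ∀ᵐ x ∂(sm n Ω),
      Filter.Tendsto (fun r => ν (closedBall x r) / sm n Ω (closedBall x r))
        (nhdsWithin 0 (Set.Ioi 0)) (nhds 0) := by
    have hbes := Besicovitch.ae_tendsto_rnDeriv ν (sm n Ω)
    have hrn : ν.rnDeriv (sm n Ω) =ᶠ[MeasureTheory.ae (sm n Ω)] 0 :=
      (Measure.rnDeriv_eq_zero ν (sm n Ω)).mpr hsing
    filter_upwards [hbes, hrn] with x h1 h2
    rw [h2] at h1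
    simpa using h1
  -- collar sets
  set tset : ℕ → Set (Eucl n) := fun j => {y | bdist Ω y < (4/3) * (1/((j:ℝ)+1))} with htset
  have hbdistcont : Continuous (bdist Ω) := Metric.continuous_infDist_pt _
  have htmeas : ∀ j, MeasurableSet (tset j) :=
    fun j => (isOpen_lt hbdistcont continuous_const).measurableSet
  have htanti : Antitone tset := by
    intro j1 j2 hj y hy
    simp only [htset, Set.mem_setOf_eq] at hy ⊢
    have h1 : (1:ℝ)/((j2:ℝ)+1) ≤ 1/((j1:ℝ)+1) := by
      apply one_div_le_one_div_of_le
      · positivity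
      · have : (j1:ℝ) ≤ (j2:ℝ) := by exact_mod_cast hj
        linarith
    nlinarith
  have hcollar0 : Filter.Tendsto (fun j => ν (tset j)) Filter.atTop (nhds 0) := by
    have hν0 : ν (⋂ j, tset j) = 0 := by
      have hsub : (⋂ j, tset j) ∩ Ω = ∅ := by
        ext z
        simp only [Set.mem_inter_iff, Set.mem_iInter, Set.mem_empty_iff_false, iff_false, not_and]
        intro hz hzΩ
        have hpos := bdist_pos_of_mem hΩo hfrne hzΩ
        obtain ⟨j, hj⟩ := exists_nat_gt ((4/3) * (1/(bdist Ω z)))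
        have := hz j
        simp only [htset, Set.mem_setOf_eq] at this
        have hj1 : (0:ℝ) < (j:ℝ) + 1 := by positivity
        have h2 : (4/3) * (1/(bdist Ω z)) < (j:ℝ) + 1 := by
          have : (j:ℝ) ≤ (j:ℝ) + 1 := by linarith
          linarith
        rw [mul_one_div, lt_div_iff₀ hj1] at this
        rw [mul_one_div, div_lt_iff₀ hpos] at h2
        nlinarith
      have := hνA (⋂ j, tset j) (MeasurableSet.iInter htmeas)
      rw [hsub] at this
      simpa using this
    have htend := tendsto_measure_iInter_atTop (μ := ν)
      (fun j => (htmeas j).nullMeasurableSet) htanti ⟨0, measure_ne_top ν _⟩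
    rw [hν0] at htend
    exact htend
  -- maximal functions
  set Mfun : ℕ → Eucl n → ℝ≥0∞ := fun j x =>
    ⨆ (q : ℚ) (_ : 0 < (q:ℝ) ∧ (q:ℝ) < D),
      (sm n Ω (ball x (q:ℝ)))⁻¹ * ν (ball x (q:ℝ) ∩ tset j) with hMfun
  set Dom : Eucl n → ℝ≥0∞ := fun x =>
    ⨆ (q : ℚ) (_ : 0 < (q:ℝ) ∧ (q:ℝ) < D),
      (sm n Ω (ball x (q:ℝ)))⁻¹ * ν (ball x (q:ℝ)) with hDomdef
  have hMmeas : ∀ j, Measurable (Mfun j) := by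
    intro j
    refine Measurable.iSup fun q => Measurable.iSup fun hq => Measurable.mul ?_ ?_
    · exact (measurable_measure_ball' (sm n Ω) _).inv
    · have heq : (fun x => ν (ball x (q:ℝ) ∩ tset j))
          = fun x => (ν.restrict (tset j)) (ball x (q:ℝ)) := by
        funext x
        rw [Measure.restrict_apply' (htmeas j)]
      rw [heq]
      exact measurable_measure_ball' (ν.restrict (tset j)) _
  have hMleDom : ∀ j x, Mfun j x ≤ Dom x := by
    intro j x
    refine iSup₂_le fun q hq => le_iSup₂_of_le q hq ?_
    exact mul_le_mul_right (measure_mono Set.inter_subset_left) _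
  have hDomle : ∀ x ∈ frontier Ω, Dom x ≤ carleson Ω u x := by
    intro x hx
    refine iSup₂_le fun q hq => ?_
    unfold carleson
    rw [← hD]
    refine le_iSup₂_of_le ((q:ℝ)) hq ?_
    rw [hνA _ measurableSet_ball]
  have hMtend : ∀ᵐ x ∂(sm n Ω), Filter.Tendsto (fun j => Mfun j x) Filter.atTop (nhds 0) := by
    have hfr_ae : ∀ᵐ x ∂(sm n Ω), x ∈ frontier Ω := by
      unfold sm
      exact ae_restrict_mem hfrmeas
    filter_upwards [hae, hfr_ae] with x hx hxfr
    rw [ENNReal.tendsto_atTop_zero]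
    intro ε₀ hε₀
    set ε₀' : ℝ≥0∞ := min ε₀ 1 with hε₀'
    have hε₀'pos : 0 < ε₀' := lt_min hε₀ one_pos
    have hε₀'top : ε₀' ≠ ∞ := ne_top_of_le_ne_top (by norm_num) (min_le_right _ _)
    set kR : ℝ := C^2 * 2 ^ ((n:ℝ)-1) with hkR
    have h2pow : (0:ℝ) < 2 ^ ((n:ℝ)-1) := Real.rpow_pos_of_pos (by norm_num) _
    have hkRpos : 0 < kR := by positivity
    have hdoub : ∀ q : ℝ, 0 < q → 2*q < D →
        sm n Ω (closedBall x q) ≤ ENNReal.ofReal kR * sm n Ω (ball x q) := by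
      intro q hq hq2
      have hqD : q < D := by linarith
      calc sm n Ω (closedBall x q) ≤ sm n Ω (ball x (2*q)) := by
            apply measure_mono
            intro z hz
            rw [mem_closedBall] at hz
            rw [mem_ball]
            linarith
        _ ≤ ENNReal.ofReal (C * (2*q) ^ ((n:ℝ)-1)) := hσball_up x hxfr _ (by linarith) hq2
        _ = ENNReal.ofReal (kR * (C⁻¹ * q ^ ((n:ℝ)-1))) := by
            congr 1
            rw [hkR, Real.mul_rpow (by norm_num) hq.le]
            field_simp
        _ = ENNReal.ofReal kR * ENNReal.ofReal (C⁻¹ * q ^ ((n:ℝ)-1)) :=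
            ENNReal.ofReal_mul hkRpos.le
        _ ≤ ENNReal.ofReal kR * sm n Ω (ball x q) :=
            mul_le_mul_right (hσball_low x hxfr q hq hqD) _
    set ε₁ : ℝ≥0∞ := ε₀' / ENNReal.ofReal kR with hε₁
    have hkR0 : ENNReal.ofReal kR ≠ 0 := (ENNReal.ofReal_pos.mpr hkRpos).ne'
    have hε₁pos : 0 < ε₁ := ENNReal.div_pos hε₀'pos.ne' ENNReal.ofReal_ne_top
    have hε₁mul : ε₁ * ENNReal.ofReal kR = ε₀' :=
      ENNReal.div_mul_cancel hkR0 ENNReal.ofReal_ne_top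
    have hev : ∀ᶠ r in nhdsWithin 0 (Set.Ioi 0),
        ν (closedBall x r) / sm n Ω (closedBall x r) < ε₁ :=
      hx.eventually_lt_const hε₁pos
    rw [eventually_nhdsWithin_iff, Metric.eventually_nhds_iff] at hev
    obtain ⟨ρ₀, hρ₀pos, hρ₀⟩ := hev
    set ρ : ℝ := min (ρ₀/2) (D/3) with hρ
    have hρpos : 0 < ρ := lt_min (by linarith) (by linarith)
    have hρD : ρ < D := lt_of_le_of_lt (min_le_right _ _) (by linarith)
    have hσρpos : 0 < sm n Ω (ball x ρ) := hσball_pos x hxfr ρ hρpos hρD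
    have hσρfin : sm n Ω (ball x ρ) ≠ ∞ := (hσball_fin x hxfr ρ hρpos hρD).ne
    have hev2 : ∀ᶠ j in Filter.atTop, ν (tset j) < ε₀' * sm n Ω (ball x ρ) :=
      hcollar0.eventually_lt_const (ENNReal.mul_pos hε₀'pos.ne' hσρpos.ne')
    obtain ⟨N, hN⟩ := Filter.eventually_atTop.mp hev2
    refine ⟨N, fun j hjN => ?_⟩
    have hj := hN j hjN
    refine iSup₂_le fun q hq => ?_
    obtain ⟨hq0, hqD⟩ := hq
    by_cases hcase : (q:ℝ) < ρ
    · have h2q : 2*(q:ℝ) < D := by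
        have hh : ρ ≤ D/3 := min_le_right _ _
        linarith
      have hq0' : dist (q:ℝ) 0 < ρ₀ := by
        rw [Real.dist_eq, sub_zero, abs_of_pos hq0]
        have hh : ρ ≤ ρ₀/2 := min_le_left _ _
        linarith
      have hrat := hρ₀ hq0' hq0
      have hcb_pos : 0 < sm n Ω (closedBall x (q:ℝ)) :=
        lt_of_lt_of_le (hσball_pos x hxfr _ hq0 hqD) (measure_mono ball_subset_closedBall)
      have hcb_fin : sm n Ω (closedBall x (q:ℝ)) ≠ ∞ := by
        refine ne_top_of_le_ne_top ?_ (hdoub (q:ℝ) hq0 h2q)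
        exact ENNReal.mul_ne_top ENNReal.ofReal_ne_top (hσball_fin x hxfr _ hq0 hqD).ne
      have hν_cb : ν (closedBall x (q:ℝ)) < ε₁ * sm n Ω (closedBall x (q:ℝ)) := by
        rwa [ENNReal.div_lt_iff (Or.inl hcb_pos.ne') (Or.inl hcb_fin)] at hrat
      calc (sm n Ω (ball x (q:ℝ)))⁻¹ * ν (ball x (q:ℝ) ∩ tset j)
          ≤ (sm n Ω (ball x (q:ℝ)))⁻¹ * ν (closedBall x (q:ℝ)) :=
            mul_le_mul_right
              (measure_mono (Set.inter_subset_left.trans ball_subset_closedBall)) _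
        _ ≤ (sm n Ω (ball x (q:ℝ)))⁻¹
            * (ε₁ * (ENNReal.ofReal kR * sm n Ω (ball x (q:ℝ)))) :=
            mul_le_mul_right
              (hν_cb.le.trans (mul_le_mul_right (hdoub (q:ℝ) hq0 h2q) _)) _
        _ = (ε₁ * ENNReal.ofReal kR)
            * ((sm n Ω (ball x (q:ℝ)))⁻¹ * sm n Ω (ball x (q:ℝ))) := by ring
        _ = ε₀' := by
            rw [ENNReal.inv_mul_cancel (hσball_pos x hxfr _ hq0 hqD).ne'
              (hσball_fin x hxfr _ hq0 hqD).ne, mul_one, hε₁mul]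
        _ ≤ ε₀ := min_le_left _ _
    · push_neg at hcase
      calc (sm n Ω (ball x (q:ℝ)))⁻¹ * ν (ball x (q:ℝ) ∩ tset j)
          ≤ (sm n Ω (ball x ρ))⁻¹ * ν (tset j) :=
            mul_le_mul' (ENNReal.inv_le_inv.mpr (measure_mono (ball_subset_ball hcase)))
              (measure_mono Set.inter_subset_right)
        _ ≤ (sm n Ω (ball x ρ))⁻¹ * (ε₀' * sm n Ω (ball x ρ)) :=
            mul_le_mul_right hj.le _
        _ = ε₀' * ((sm n Ω (ball x ρ))⁻¹ * sm n Ω (ball x ρ)) := by ring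
        _ = ε₀' := by rw [ENNReal.inv_mul_cancel hσρpos.ne' hσρfin, mul_one]
        _ ≤ ε₀ := min_le_left _ _
  have hfr_ae : ∀ᵐ x ∂(sm n Ω), x ∈ frontier Ω := by
    unfold sm
    exact ae_restrict_mem hfrmeas
  have hIDom : ∫⁻ x, Dom x ^ p ∂(sm n Ω) ≠ ∞ := by
    refine ne_top_of_le_ne_top hIcarl ?_
    have hcongr1 : (fun x => Dom x ^ p)
        =ᶠ[MeasureTheory.ae (sm n Ω)] (frontier Ω).indicator (fun x => Dom x ^ p) := by
      filter_upwards [hfr_ae] with x hx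
      rw [Set.indicator_of_mem hx]
    have hcongr2 : (frontier Ω).indicator (fun x => carleson Ω u x ^ p)
        =ᶠ[MeasureTheory.ae (sm n Ω)] (fun x => carleson Ω u x ^ p) := by
      filter_upwards [hfr_ae] with x hx
      rw [Set.indicator_of_mem hx]
    rw [lintegral_congr_ae hcongr1, ← lintegral_congr_ae hcongr2]
    apply lintegral_mono
    intro x
    by_cases hx : x ∈ frontier Ω
    · rw [Set.indicator_of_mem hx, Set.indicator_of_mem hx]
      exact ENNReal.rpow_le_rpow (hDomle x hx) hp0.le
    · rw [Set.indicator_of_notMem hx, Set.indicator_of_notMem hx]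
  have htendInt : Filter.Tendsto (fun j => ∫⁻ x, Mfun j x ^ p ∂(sm n Ω))
      Filter.atTop (nhds 0) := by
    have h0 : (0:ℝ≥0∞) = ∫⁻ x, (fun _ : Eucl n => (0:ℝ≥0∞)) x ∂(sm n Ω) := by simp
    rw [h0]
    apply tendsto_lintegral_of_dominated_convergence (bound := fun x => Dom x ^ p)
    · intro j
      exact (ENNReal.continuous_rpow_const.measurable).comp (hMmeas j)
    · intro j
      refine Filter.Eventually.of_forall fun x => ?_
      exact ENNReal.rpow_le_rpow (hMleDom j x) hp0.le
    · exact hIDom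
    · filter_upwards [hMtend] with x hx
      have hcont : Filter.Tendsto (fun y : ℝ≥0∞ => y ^ p) (nhds 0) (nhds ((0:ℝ≥0∞) ^ p)) :=
        ENNReal.continuous_rpow_const.tendsto 0
      have hcomp := hcont.comp hx
      rwa [ENNReal.zero_rpow_of_pos hp0] at hcomp
  -- numerical targets
  set tgt : ℝ≥0∞ := ENNReal.ofReal ε ^ p with htgt
  have htgt0 : 0 < tgt := ENNReal.rpow_pos (ENNReal.ofReal_pos.mpr hε) ENNReal.ofReal_ne_top
  have htgtfin : tgt ≠ ∞ := by
    rw [htgt]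
    exact (ENNReal.rpow_lt_top_of_nonneg hp0.le ENNReal.ofReal_ne_top).ne
  set two : ℝ≥0∞ := (2:ℝ≥0∞) ^ p with htwo
  have htwo0 : two ≠ 0 := (ENNReal.rpow_pos (by norm_num) (by norm_num)).ne'
  have htwofin : two ≠ ∞ := (ENNReal.rpow_lt_top_of_nonneg hp0.le (by norm_num)).ne
  have htgt2pos : 0 < tgt / 2 := ENNReal.div_pos htgt0.ne' (by norm_num)
  obtain ⟨j, hjsmall⟩ : ∃ j : ℕ, two * ∫⁻ x, Mfun j x ^ p ∂(sm n Ω) < tgt / 2 := by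
    have hpos2 : 0 < tgt / 2 / two := ENNReal.div_pos htgt2pos.ne' htwofin
    obtain ⟨j, hj⟩ := (htendInt.eventually_lt_const hpos2).exists
    refine ⟨j, ?_⟩
    calc two * ∫⁻ x, Mfun j x ^ p ∂(sm n Ω) < two * (tgt / 2 / two) := by
          exact ENNReal.mul_lt_mul_right htwo0 htwofin hj
      _ = (tgt / 2 / two) * two := mul_comm _ _
      _ = tgt / 2 := ENNReal.div_mul_cancel htwo0 htwofin
  set σU := sm n Ω Set.univ with hσU
  set m0 : ℝ≥0∞ := min 1 (tgt / 2 / (two * (σU + 1))) with hm0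
  have hm0pos : 0 < m0 := by
    apply lt_min one_pos
    apply ENNReal.div_pos htgt2pos.ne'
    exact ENNReal.mul_ne_top htwofin (by simp [hσfin.ne])
  have hm0fin : m0 ≠ ∞ := ne_top_of_le_ne_top (by norm_num) (min_le_left _ _)
  set ε₁c : ℝ≥0∞ := m0 ^ (1/p) with hε₁c
  have hε₁cpos : 0 < ε₁c := ENNReal.rpow_pos hm0pos hm0fin
  have hε₁cfin : ε₁c ≠ ∞ := (ENNReal.rpow_lt_top_of_nonneg (by positivity) hm0fin).ne
  have hε₁cp : ε₁c ^ p = m0 := by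
    rw [hε₁c, ← ENNReal.rpow_mul, one_div, inv_mul_cancel₀ hp0', ENNReal.rpow_one]
  have hS1 : two * (ε₁c ^ p * σU) ≤ tgt / 2 := by
    rw [hε₁cp]
    calc two * (m0 * σU) ≤ (two * (σU + 1)) * m0 := by
          rw [show two * (m0 * σU) = (two * σU) * m0 by ring]
          apply mul_le_mul_left
          apply mul_le_mul_right
          exact le_self_add
      _ ≤ (two * (σU+1)) * (tgt / 2 / (two * (σU+1))) := by
          apply mul_le_mul_right
          exact min_le_right _ _
      _ ≤ tgt / 2 := ENNReal.mul_div_le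
  -- the compact set and approximation at stage j
  set cK : ℝ := 1/((j:ℝ)+1) with hcK
  have hcKpos : 0 < cK := by positivity
  set c₂ : ℝ := (4/5) * cK with hc₂
  have hc₂pos : 0 < c₂ := by positivity
  set Kj : Set (Eucl n) := {z ∈ closure Ω | cK ≤ bdist Ω z} with hKj
  have hKjclosed : IsClosed Kj := by
    have hrw : Kj = closure Ω ∩ (bdist Ω) ⁻¹' (Set.Ici cK) := rfl
    rw [hrw]
    exact isClosed_closure.inter (isClosed_Ici.preimage hbdistcont)
  have hKjbdd : Bornology.IsBounded Kj := hΩbdd.closure.subset (fun z hz => hz.1)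
  have hKjcomp : IsCompact Kj := isCompact_of_isClosed_isBounded hKjclosed hKjbdd
  have hKjΩ : Kj ⊆ Ω := by
    intro z hz
    have hz1 : z ∈ closure Ω := hz.1
    have hz2 : z ∉ frontier Ω := by
      intro hmem
      have h0 : bdist Ω z = 0 := Metric.infDist_zero_of_mem hmem
      have := hz.2
      rw [h0] at this
      exact absurd this (not_le.mpr hcKpos)
    rw [hΩo.frontier_eq] at hz2
    by_contra hzΩ
    exact hz2 ⟨hz1, hzΩ⟩
  have hKjmeas : MeasurableSet Kj := hKjclosed.measurableSet
  have hKjvol : volume Kj ≠ ∞ := hKjcomp.measure_lt_top.ne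
  have hKjF : ∫⁻ z in Kj, (‖u z‖₊ : ℝ≥0∞)^2 ∂volume ≠ ∞ := (hu Kj hKjcomp hKjΩ).ne
  haveI : Nonempty (Fin n) := ⟨⟨0, by omega⟩⟩
  set Vunit : ℝ≥0∞ := volume (ball (0 : Eucl n) 1) with hVunit
  have hVunit0 : Vunit ≠ 0 := (measure_ball_pos volume 0 one_pos).ne'
  have hVunitfin : Vunit ≠ ∞ := measure_ball_lt_top.ne
  set Φ : ℝ≥0∞ := Vunit * ENNReal.ofReal (C * D) with hΦ
  have hΦ0 : Φ ≠ 0 :=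
    mul_ne_zero hVunit0 (ENNReal.ofReal_pos.mpr (by positivity)).ne'
  have hΦfin : Φ ≠ ∞ := ENNReal.mul_ne_top hVunitfin ENNReal.ofReal_ne_top
  set V₅ : ℝ≥0∞ := volume (ball (0 : Eucl n) (c₂/4)) with hV₅
  have hV₅0 : V₅ ≠ 0 := (measure_ball_pos volume 0 (by positivity)).ne'
  have hV₅fin : V₅ ≠ ∞ := measure_ball_lt_top.ne
  set X0 : ℝ≥0∞ := ε₁c * ENNReal.ofReal c₂ * Φ⁻¹ with hX0
  set η : ℝ≥0∞ := V₅ * X0 ^ (2:ℕ) with hη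
  have hc₂0' : ENNReal.ofReal c₂ ≠ 0 := (ENNReal.ofReal_pos.mpr hc₂pos).ne'
  have hX00 : X0 ≠ 0 :=
    mul_ne_zero (mul_ne_zero hε₁cpos.ne' hc₂0') (ENNReal.inv_ne_zero.mpr hΦfin)
  have hX0fin : X0 ≠ ∞ :=
    ENNReal.mul_ne_top (ENNReal.mul_ne_top hε₁cfin ENNReal.ofReal_ne_top)
      (ENNReal.inv_ne_top.mpr hΦ0)
  have hηpos : 0 < η := by
    apply ENNReal.mul_pos hV₅0
    exact pow_ne_zero 2 hX00
  obtain ⟨g, hgmeas, hgbdd, hgsupp, e, hemeas, hIe, hgood⟩ :=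
    approx_lemma volume hKjmeas hKjvol u hKjF hηpos
  -- the square-root bound for the approximation error
  have hβ : ((∫⁻ z in Kj, e z ∂volume) / V₅) ^ ((1:ℝ)/2) ≤ X0 := by
    have h1 : (∫⁻ z in Kj, e z ∂volume) / V₅ ≤ η / V₅ := ENNReal.div_le_div hIe.le le_rfl
    have h2 : η / V₅ = X0 ^ (2:ℕ) := by
      rw [hη]
      exact ennreal_mul_div_cancel_left _ hV₅0 hV₅fin
    calc ((∫⁻ z in Kj, e z ∂volume) / V₅) ^ ((1:ℝ)/2)
        ≤ (X0 ^ (2:ℕ)) ^ ((1:ℝ)/2) := by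
          rw [← h2]
          exact ENNReal.rpow_le_rpow h1 (by norm_num)
      _ = X0 := by
          rw [← ENNReal.rpow_natCast X0 2, ← ENNReal.rpow_mul]
          norm_num
  -- the pointwise Carleson bound
  have hcar : ∀ x ∈ frontier Ω,
      carleson Ω (fun w => u w - g w) x ≤ ε₁c + Mfun j x := by
    intro x hx
    unfold carleson
    rw [← hD]
    refine iSup₂_le fun r hr => ?_
    obtain ⟨hr0, hrD⟩ := hr
    set XB : ℝ≥0∞ := X0 * (ENNReal.ofReal c₂)⁻¹ with hXB
    set Xf : Eucl n → ℝ≥0∞ :=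
      fun y => ({y : Eucl n | c₂ ≤ bdist Ω y}).indicator (fun _ => XB) y with hXf
    have hXfmeas : Measurable Xf :=
      measurable_const.indicator ((isClosed_le continuous_const hbdistcont).measurableSet)
    set Yf : Eucl n → ℝ≥0∞ :=
      fun y => (tset j).indicator (fun y => avg2 Ω u y / ENNReal.ofReal (bdist Ω y)) y with hYf
    have hpt : ∀ y ∈ ball x r ∩ Ω,
        avg2 Ω (fun w => u w - g w) y / ENNReal.ofReal (bdist Ω y) ≤ Xf y + Yf y := by
      intro y hy
      obtain ⟨hyball, hyΩ⟩ := hy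
      have hδpos : 0 < bdist Ω y := bdist_pos_of_mem hΩo hfrne hyΩ
      set B := ball y (bdist Ω y / 4) with hB
      have hBsub : B ⊆ Ω := ball_quarter_subset hΩo hfrne hyΩ
      have havg2eq : avg2 Ω (fun w => u w - g w) y
          = ((∫⁻ z in B, (‖u z - g z‖₊ : ℝ≥0∞)^2 ∂volume) / volume B) ^ ((1:ℝ)/2) := by
        unfold avg2
        rw [setLAverage_eq]
      have hmeq : volume.restrict B = volume.restrict (B ∩ Kj) + volume.restrict (B \ Kj) := by
        conv_lhs => rw [← Set.inter_union_diff B Kj]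
        exact Measure.restrict_union (Set.disjoint_left.mpr fun z hz1 hz2 => hz2.2 hz1.2)
          (measurableSet_ball.diff hKjmeas)
      have hQeq : ∫⁻ z in B \ Kj, (‖u z - g z‖₊ : ℝ≥0∞)^2 ∂volume
          = ∫⁻ z in B \ Kj, (‖u z‖₊ : ℝ≥0∞)^2 ∂volume := by
        refine setLIntegral_congr_on (measurableSet_ball.diff hKjmeas) fun z hz => ?_
        rw [hgsupp z hz.2, sub_zero]
      have havg_le : avg2 Ω (fun w => u w - g w) y
          ≤ ((∫⁻ z in B ∩ Kj, (‖u z - g z‖₊ : ℝ≥0∞)^2 ∂volume) / volume B) ^ ((1:ℝ)/2)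
            + ((∫⁻ z in B \ Kj, (‖u z‖₊ : ℝ≥0∞)^2 ∂volume) / volume B) ^ ((1:ℝ)/2) := by
        rw [havg2eq]
        have hnum : ∫⁻ z in B, (‖u z - g z‖₊ : ℝ≥0∞)^2 ∂volume
            = (∫⁻ z in B ∩ Kj, (‖u z - g z‖₊ : ℝ≥0∞)^2 ∂volume)
              + ∫⁻ z in B \ Kj, (‖u z‖₊ : ℝ≥0∞)^2 ∂volume := by
          rw [← hQeq]
          conv_lhs => rw [hmeq]
          exact lintegral_add_measure _ _ _
        rw [hnum, ENNReal.add_div]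
        exact ENNReal.rpow_add_le_add_rpow _ _ (by norm_num) (by norm_num)
      have hA : ((∫⁻ z in B ∩ Kj, (‖u z - g z‖₊ : ℝ≥0∞)^2 ∂volume) / volume B) ^ ((1:ℝ)/2)
          / ENNReal.ofReal (bdist Ω y) ≤ Xf y := by
        by_cases hc : c₂ ≤ bdist Ω y
        · have hXfy : Xf y = XB :=
            Set.indicator_of_mem (show y ∈ {y : Eucl n | c₂ ≤ bdist Ω y} from hc) _
          rw [hXfy, hXB]
          have hvol : V₅ ≤ volume B := by
            rw [hV₅, hB]
            rw [Measure.addHaar_ball volume 0 (by positivity : (0:ℝ) ≤ c₂/4),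
                Measure.addHaar_ball volume y (by positivity : (0:ℝ) ≤ bdist Ω y / 4)]
            apply mul_le_mul_left
            apply ENNReal.ofReal_le_ofReal
            apply pow_le_pow_left₀ (by positivity)
            linarith
          have hAq : ((∫⁻ z in B ∩ Kj, (‖u z - g z‖₊ : ℝ≥0∞)^2 ∂volume) / volume B) ^ ((1:ℝ)/2)
              ≤ X0 := by
            refine le_trans (ENNReal.rpow_le_rpow ?_ (by norm_num)) hβ
            refine ENNReal.div_le_div ?_ hvol
            calc ∫⁻ z in B ∩ Kj, (‖u z - g z‖₊ : ℝ≥0∞)^2 ∂volume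
                ≤ ∫⁻ z in B ∩ Kj, e z ∂volume :=
                  hgood (B ∩ Kj) (measurableSet_ball.inter hKjmeas) Set.inter_subset_right
              _ ≤ ∫⁻ z in Kj, e z ∂volume :=
                  lintegral_mono' (Measure.restrict_mono Set.inter_subset_right le_rfl) le_rfl
          rw [div_eq_mul_inv]
          exact mul_le_mul' hAq (ENNReal.inv_le_inv.mpr (ENNReal.ofReal_le_ofReal hc))
        · have hempty : B ∩ Kj = ∅ := by
            ext z
            simp only [Set.mem_inter_iff, Set.mem_empty_iff_false, iff_false, not_and]
            intro hzB hzK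
            apply hc
            have h1 : Metric.infDist z (frontier Ω)
                ≤ Metric.infDist y (frontier Ω) + dist z y := Metric.infDist_le_infDist_add_dist
            have h2 : cK ≤ bdist Ω z := hzK.2
            have h3 : dist z y < bdist Ω y / 4 := mem_ball.mp hzB
            rw [hc₂]
            unfold bdist at h2 ⊢
            unfold bdist at h3
            linarith
          rw [hempty]
          have hz0 : ∫⁻ z in (∅ : Set (Eucl n)), (‖u z - g z‖₊ : ℝ≥0∞)^2 ∂volume = 0 := by
            rw [Measure.restrict_empty]
            exact lintegral_zero_measure _
          rw [hz0, ENNReal.zero_div, ENNReal.zero_rpow_of_pos (by norm_num), ENNReal.zero_div]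
          exact zero_le
      have hBp : ((∫⁻ z in B \ Kj, (‖u z‖₊ : ℝ≥0∞)^2 ∂volume) / volume B) ^ ((1:ℝ)/2)
          / ENNReal.ofReal (bdist Ω y) ≤ Yf y := by
        rcases Set.eq_empty_or_nonempty (B \ Kj) with hem | hne
        · rw [hem]
          have hz0 : ∫⁻ z in (∅ : Set (Eucl n)), (‖u z‖₊ : ℝ≥0∞)^2 ∂volume = 0 := by
            rw [Measure.restrict_empty]
            exact lintegral_zero_measure _
          rw [hz0, ENNReal.zero_div, ENNReal.zero_rpow_of_pos (by norm_num), ENNReal.zero_div]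
          exact zero_le
        · obtain ⟨z, hzB, hzK⟩ := hne
          have hz1 : z ∈ Ω := hBsub hzB
          have hz2 : ¬ cK ≤ bdist Ω z := fun hcon => hzK ⟨subset_closure hz1, hcon⟩
          push_neg at hz2
          have hyC : y ∈ tset j := by
            simp only [htset, Set.mem_setOf_eq]
            have h1 : Metric.infDist y (frontier Ω)
                ≤ Metric.infDist z (frontier Ω) + dist y z := Metric.infDist_le_infDist_add_dist
            have h3 : dist z y < bdist Ω y / 4 := mem_ball.mp hzB
            rw [dist_comm] at h3
            rw [hcK] at hz2
            unfold bdist at hz2 ⊢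
            unfold bdist at h3
            linarith
          have hYfy : Yf y = avg2 Ω u y / ENNReal.ofReal (bdist Ω y) :=
            Set.indicator_of_mem hyC _
          rw [hYfy]
          refine ENNReal.div_le_div ?_ le_rfl
          have havg2u : avg2 Ω u y
              = ((∫⁻ z in B, (‖u z‖₊ : ℝ≥0∞)^2 ∂volume) / volume B) ^ ((1:ℝ)/2) := by
            unfold avg2
            rw [setLAverage_eq]
          rw [havg2u]
          refine ENNReal.rpow_le_rpow ?_ (by norm_num)
          refine ENNReal.div_le_div ?_ le_rfl
          exact lintegral_mono' (Measure.restrict_mono Set.diff_subset le_rfl) le_rfl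
      calc avg2 Ω (fun w => u w - g w) y / ENNReal.ofReal (bdist Ω y)
          ≤ (((∫⁻ z in B ∩ Kj, (‖u z - g z‖₊ : ℝ≥0∞)^2 ∂volume) / volume B) ^ ((1:ℝ)/2)
              + ((∫⁻ z in B \ Kj, (‖u z‖₊ : ℝ≥0∞)^2 ∂volume) / volume B) ^ ((1:ℝ)/2))
            / ENNReal.ofReal (bdist Ω y) := ENNReal.div_le_div havg_le le_rfl
        _ = ((∫⁻ z in B ∩ Kj, (‖u z - g z‖₊ : ℝ≥0∞)^2 ∂volume) / volume B) ^ ((1:ℝ)/2)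
              / ENNReal.ofReal (bdist Ω y)
            + ((∫⁻ z in B \ Kj, (‖u z‖₊ : ℝ≥0∞)^2 ∂volume) / volume B) ^ ((1:ℝ)/2)
              / ENNReal.ofReal (bdist Ω y) := ENNReal.add_div
        _ ≤ Xf y + Yf y := add_le_add hA hBp
    have hint : ∫⁻ y in ball x r ∩ Ω,
          avg2 Ω (fun w => u w - g w) y / ENNReal.ofReal (bdist Ω y) ∂volume
        ≤ (∫⁻ y in ball x r ∩ Ω, Xf y ∂volume) + ∫⁻ y in ball x r ∩ Ω, Yf y ∂volume := by
      refine le_trans (setLIntegral_mono_on' (measurableSet_ball.inter hΩmeas) hpt) ?_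
      rw [lintegral_add_left hXfmeas]
    have hXint : (sm n Ω (ball x r))⁻¹ * ∫⁻ y in ball x r ∩ Ω, Xf y ∂volume ≤ ε₁c := by
      have h1 : ∫⁻ y in ball x r ∩ Ω, Xf y ∂volume ≤ XB * volume (ball x r) := by
        calc ∫⁻ y in ball x r ∩ Ω, Xf y ∂volume
            ≤ ∫⁻ _ in ball x r ∩ Ω, XB ∂volume := by
              apply lintegral_mono
              intro y
              exact Set.indicator_le (fun _ _ => le_rfl) y
          _ = XB * volume (ball x r ∩ Ω) := by
              rw [lintegral_const, Measure.restrict_apply_univ]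
          _ ≤ XB * volume (ball x r) := mul_le_mul_right (measure_mono Set.inter_subset_left) _
      have h2 : (sm n Ω (ball x r))⁻¹ ≤ (ENNReal.ofReal (C⁻¹ * r ^ ((n:ℝ)-1)))⁻¹ :=
        ENNReal.inv_le_inv.mpr (hσball_low x hx r hr0 hrD)
      have h3 : volume (ball x r) = ENNReal.ofReal (r ^ n) * Vunit := by
        rw [hVunit]
        rw [Measure.addHaar_ball volume x hr0.le, finrank_euclideanSpace_fin]
      have hden : (0:ℝ) < C⁻¹ * r ^ ((n:ℝ)-1) := by
        have hrp := Real.rpow_pos_of_pos hr0 ((n:ℝ)-1)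
        positivity
      have h6 : r ^ n / (C⁻¹ * r ^ ((n:ℝ)-1)) = C * r := by
        have hrpow_ne : r ^ ((n:ℝ)-1) ≠ 0 := (Real.rpow_pos_of_pos hr0 _).ne'
        rw [← Real.rpow_natCast r n,
          show ((n:ℕ):ℝ) = ((n:ℝ)-1)+1 by push_cast; ring,
          Real.rpow_add_one hr0.ne']
        field_simp
        ring
      have h4 : (ENNReal.ofReal (C⁻¹ * r ^ ((n:ℝ)-1)))⁻¹ * volume (ball x r) ≤ Φ := by
        rw [h3, hΦ]
        have h5 : (ENNReal.ofReal (C⁻¹ * r ^ ((n:ℝ)-1)))⁻¹ * ENNReal.ofReal (r ^ n)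
            = ENNReal.ofReal (C * r) := by
          rw [← h6, ENNReal.ofReal_div_of_pos hden, div_eq_mul_inv, mul_comm]
        calc (ENNReal.ofReal (C⁻¹ * r ^ ((n:ℝ)-1)))⁻¹ * (ENNReal.ofReal (r ^ n) * Vunit)
            = ((ENNReal.ofReal (C⁻¹ * r ^ ((n:ℝ)-1)))⁻¹ * ENNReal.ofReal (r ^ n)) * Vunit := by
              ring
          _ = ENNReal.ofReal (C * r) * Vunit := by rw [h5]
          _ ≤ ENNReal.ofReal (C * D) * Vunit := by
              apply mul_le_mul_left
              apply ENNReal.ofReal_le_ofReal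
              nlinarith
          _ = Vunit * ENNReal.ofReal (C * D) := mul_comm _ _
      calc (sm n Ω (ball x r))⁻¹ * ∫⁻ y in ball x r ∩ Ω, Xf y ∂volume
          ≤ (ENNReal.ofReal (C⁻¹ * r ^ ((n:ℝ)-1)))⁻¹ * (XB * volume (ball x r)) :=
            mul_le_mul' h2 h1
        _ = XB * ((ENNReal.ofReal (C⁻¹ * r ^ ((n:ℝ)-1)))⁻¹ * volume (ball x r)) := by ring
        _ ≤ XB * Φ := mul_le_mul_right h4 _
        _ = ε₁c := by
            rw [hXB, hX0]
            rw [show ε₁c * ENNReal.ofReal c₂ * Φ⁻¹ * (ENNReal.ofReal c₂)⁻¹ * Φ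
                = ε₁c * (ENNReal.ofReal c₂ * (ENNReal.ofReal c₂)⁻¹) * (Φ⁻¹ * Φ) by ring]
            rw [ENNReal.mul_inv_cancel hc₂0' ENNReal.ofReal_ne_top,
                ENNReal.inv_mul_cancel hΦ0 hΦfin, mul_one, mul_one]
    have hYint : (sm n Ω (ball x r))⁻¹ * ∫⁻ y in ball x r ∩ Ω, Yf y ∂volume ≤ Mfun j x := by
      have h1 : ∫⁻ y in ball x r ∩ Ω, Yf y ∂volume = ν (ball x r ∩ tset j) := by
        rw [hYf]
        rw [lintegral_indicator (htmeas j)]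
        rw [Measure.restrict_restrict (htmeas j)]
        rw [show tset j ∩ (ball x r ∩ Ω) = (ball x r ∩ tset j) ∩ Ω by
          ext z; simp only [Set.mem_inter_iff]; tauto]
        rw [← Measure.restrict_restrict (measurableSet_ball.inter (htmeas j))]
        rw [hνA _ (measurableSet_ball.inter (htmeas j))]
        rw [Measure.restrict_restrict (measurableSet_ball.inter (htmeas j))]
      rw [h1]
      have hres : ν (ball x r ∩ tset j) = (ν.restrict (tset j)) (ball x r) :=
        (Measure.restrict_apply' (htmeas j)).symm
      have hcup : ball x r = ⋃ q : {q : ℚ // 0 < (q:ℝ) ∧ (q:ℝ) < r}, ball x ((q.1 : ℚ) : ℝ) := by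
        ext z
        simp only [Set.mem_iUnion, mem_ball]
        constructor
        · intro hz
          obtain ⟨q, hq1, hq2⟩ := exists_rat_btwn hz
          exact ⟨⟨q, ⟨lt_of_le_of_lt dist_nonneg hq1, hq2⟩⟩, hq1⟩
        · rintro ⟨⟨q, hq⟩, hz⟩
          exact lt_trans hz hq.2
      have hdir : Directed (· ⊆ ·)
          (fun q : {q : ℚ // 0 < (q:ℝ) ∧ (q:ℝ) < r} => ball x ((q.1 : ℚ) : ℝ)) := by
        intro q1 q2
        have hmax : ((max q1.1 q2.1 : ℚ) : ℝ) = max ((q1.1:ℚ):ℝ) ((q2.1:ℚ):ℝ) := by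
          push_cast
          rfl
        refine ⟨⟨max q1.1 q2.1, ?_, ?_⟩, ball_subset_ball ?_, ball_subset_ball ?_⟩
        · rw [hmax]; exact lt_max_of_lt_left q1.2.1
        · rw [hmax]; exact max_lt q1.2.2 q2.2.2
        · rw [hmax]; exact le_max_left _ _
        · rw [hmax]; exact le_max_right _ _
      have hsupeq : (ν.restrict (tset j)) (ball x r)
          = ⨆ q : {q : ℚ // 0 < (q:ℝ) ∧ (q:ℝ) < r},
              (ν.restrict (tset j)) (ball x ((q.1 : ℚ) : ℝ)) := by
        conv_lhs => rw [hcup]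
        exact hdir.measure_iUnion
      rw [hres, hsupeq, ENNReal.mul_iSup]
      refine iSup_le fun q => ?_
      calc (sm n Ω (ball x r))⁻¹ * (ν.restrict (tset j)) (ball x ((q.1:ℚ):ℝ))
          ≤ (sm n Ω (ball x ((q.1:ℚ):ℝ)))⁻¹ * (ν.restrict (tset j)) (ball x ((q.1:ℚ):ℝ)) := by
            apply mul_le_mul_left
            exact ENNReal.inv_le_inv.mpr (measure_mono (ball_subset_ball q.2.2.le))
        _ ≤ Mfun j x := by
            rw [hMfun]
            refine le_iSup₂_of_le q.1 ⟨q.2.1, lt_trans q.2.2 hrD⟩ ?_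
            rw [Measure.restrict_apply' (htmeas j)]
    calc (sm n Ω (ball x r))⁻¹
          * ∫⁻ y in ball x r ∩ Ω,
              avg2 Ω (fun w => u w - g w) y / ENNReal.ofReal (bdist Ω y) ∂volume
        ≤ (sm n Ω (ball x r))⁻¹
          * ((∫⁻ y in ball x r ∩ Ω, Xf y ∂volume) + ∫⁻ y in ball x r ∩ Ω, Yf y ∂volume) :=
          mul_le_mul_right hint _
      _ = (sm n Ω (ball x r))⁻¹ * ∫⁻ y in ball x r ∩ Ω, Xf y ∂volume
          + (sm n Ω (ball x r))⁻¹ * ∫⁻ y in ball x r ∩ Ω, Yf y ∂volume := mul_add _ _ _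
      _ ≤ ε₁c + Mfun j x := add_le_add hXint hYint
  -- conclusion
  refine ⟨g, ⟨hgmeas, hgbdd, Kj, hKjcomp, hKjΩ, hgsupp⟩, ?_⟩
  unfold lpnorm
  have hMint_meas : Measurable fun x => Mfun j x ^ p :=
    (ENNReal.continuous_rpow_const.measurable).comp (hMmeas j)
  have hintlt : ∫⁻ x, carleson Ω (fun x => u x - g x) x ^ p ∂(sm n Ω) < tgt := by
    calc ∫⁻ x, carleson Ω (fun x => u x - g x) x ^ p ∂(sm n Ω)
        = ∫⁻ x, (frontier Ω).indicator
            (fun x => carleson Ω (fun w => u w - g w) x ^ p) x ∂(sm n Ω) := by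
          apply lintegral_congr_ae
          filter_upwards [hfr_ae] with x hx
          rw [Set.indicator_of_mem hx]
      _ ≤ ∫⁻ x, (frontier Ω).indicator (fun x => (ε₁c + Mfun j x) ^ p) x ∂(sm n Ω) := by
          apply lintegral_mono
          intro x
          by_cases hx : x ∈ frontier Ω
          · rw [Set.indicator_of_mem hx, Set.indicator_of_mem hx]
            exact ENNReal.rpow_le_rpow (hcar x hx) hp0.le
          · rw [Set.indicator_of_notMem hx, Set.indicator_of_notMem hx]
      _ = ∫⁻ x, (ε₁c + Mfun j x) ^ p ∂(sm n Ω) := by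
          apply lintegral_congr_ae
          filter_upwards [hfr_ae] with x hx
          rw [Set.indicator_of_mem hx]
      _ ≤ ∫⁻ x, two * (ε₁c ^ p + Mfun j x ^ p) ∂(sm n Ω) := by
          apply lintegral_mono
          intro x
          rw [htwo]
          exact rpow_add_le_two_rpow _ _ hp0.le
      _ = two * (ε₁c ^ p * σU + ∫⁻ x, Mfun j x ^ p ∂(sm n Ω)) := by
          rw [lintegral_const_mul two (f := fun x => ε₁c ^ p + Mfun j x ^ p) (measurable_const.add hMint_meas)]
          congr 1
          rw [lintegral_add_left measurable_const, lintegral_const]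
      _ = two * (ε₁c ^ p * σU) + two * ∫⁻ x, Mfun j x ^ p ∂(sm n Ω) := mul_add _ _ _
      _ < tgt / 2 + tgt / 2 :=
          ENNReal.add_lt_add_of_le_of_lt
            (ne_top_of_le_ne_top (ne_top_of_le_ne_top htgtfin ENNReal.half_le_self) hS1) hS1 hjsmall
      _ = tgt := ENNReal.add_halves tgt
  calc (∫⁻ x, carleson Ω (fun x => u x - g x) x ^ p ∂(sm n Ω)) ^ (1/p)
      < tgt ^ (1/p) := ENNReal.rpow_lt_rpow hintlt hip
    _ = ENNReal.ofReal ε := by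
        rw [htgt, ← ENNReal.rpow_mul, mul_one_div, div_self hp0', ENNReal.rpow_one]

end RobinBVP
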